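/- arXiv:2210.11349 — 4 statements merged into one kernel-verified Lean document; each statement's English description precedes it below -/
import Mathlib

section
/- Let m, n ≥ 2 and let p, q be nonnegative integers with p + q ≥ 1. Fix index sequences i = (i_1,…,i_p), k = (k_1,…,k_p) ∈ {1,…,m}^p and j = (j_1,…,j_q), l = (l_1,…,l_q) ∈ {1,…,n}^q. Then for every σ ∈ S_{p+q}: (1) Σ_{s_1,…,s_q = 1}^{m} δ_σ(i∪s, k∪s) = δ_{pr₁(σ)}(i,k) · m^{κ₁(σ)}, and (2) Σ_{t_1,…,t_p = 1}^{n} δ_σ(t∪j, t∪l) = δ_{pr₂(σ)}(j,l) · n^{κ₂(σ)}, where i∪s denotes the concatenated sequence (i_1,…,i_p,s_1,…,s_q), k∪s = (k_1,…,k_p,s_1,…,s_q), t∪j = (t_1,…,t_p,j_1,…,j_q), and t∪l = (t_1,…,t_p,l_1,…,l_q). -/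
open MeasureTheory Finset

namespace QMP

/-- `δ_f(a,b) = 1` if `a (f r) = b r` for all `r`, else `0`. -/
def deltaFun {d : ℕ} {β : Type*} [DecidableEq β] (f : Fin d → Fin d) (a b : Fin d → β) : ℝ :=
  if ∀ r, a (f r) = b r then 1 else 0

/-- the set of minimal representatives of the cycles (orbits) of `σ`, including fixed points -/
def cycleReps {d : ℕ} (σ : Equiv.Perm (Fin d)) : Finset (Fin d) :=
  Finset.univ.filter fun x : Fin d => ∀ y, σ.SameCycle x y → x ≤ y

/-- `κ(σ)`: the total number of cycles of `σ`, including fixed points -/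
def cycleCount {d : ℕ} (σ : Equiv.Perm (Fin d)) : ℕ := (cycleReps σ).card

/-- the length of the cycle of `σ` containing `x` -/
def cycleLen {d : ℕ} (σ : Equiv.Perm (Fin d)) (x : Fin d) : ℕ :=
  (Finset.univ.filter fun y => σ.SameCycle x y).card

/-- `Tr_σ(λ) = ∏_{cycles c of σ} Tr(diag(λ)^{|c|})` -/
def trPerm {d : ℕ} {ι : Type*} [Fintype ι] (σ : Equiv.Perm (Fin d)) (lam : ι → ℝ) : ℝ :=
  ∏ x ∈ cycleReps σ, ∑ a : ι, lam a ^ cycleLen σ x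

/-- `Wg` satisfies the Weingarten convolution identity for dimension `N` -/
def IsWeingarten (N : ℕ) {d : ℕ} (Wg : Equiv.Perm (Fin d) → ℝ) : Prop :=
  ∀ σ ρ : Equiv.Perm (Fin d),
    (∑ τ : Equiv.Perm (Fin d), (N : ℝ) ^ cycleCount (σ⁻¹ * τ) * Wg (τ⁻¹ * ρ)) =
      if σ = ρ then 1 else 0

/-- the number of cycles of `σ` whose orbit is disjoint from the block `[a, a+s)` -/
def kappaAway {d : ℕ} (σ : Equiv.Perm (Fin d)) (a s : ℕ) : ℕ :=
  (Finset.univ.filter fun x : Fin d =>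
    (∀ y, σ.SameCycle x y → x ≤ y) ∧ ∀ y, σ.SameCycle x y → y.val < a ∨ a + s ≤ y.val).card

/-- the first-return map of `σ` to the block `[a, a+s)` of `Fin d` (relabeled as `Fin s`):
`r ↦ σ^k(a+r) - a` where `k ≥ 1` is minimal with `σ^k(a+r) ∈ [a, a+s)`. -/
noncomputable def prBlock {d : ℕ} (σ : Equiv.Perm (Fin d)) (a : ℕ) {s : ℕ} (r : Fin s) :
    Fin s :=
  if hd : a + s ≤ d then
    have hx : a + r.val < d := lt_of_lt_of_le (Nat.add_lt_add_left r.isLt a) hd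
    have hex : ∃ kk : ℕ, 0 < kk ∧ a ≤ ((σ ^ kk) ⟨a + r.val, hx⟩).val ∧
        ((σ ^ kk) ⟨a + r.val, hx⟩).val < a + s :=
      ⟨orderOf σ, orderOf_pos σ, by
        rw [pow_orderOf_eq_one, Equiv.Perm.one_apply]
        exact ⟨Nat.le_add_right a r.val, Nat.add_lt_add_left r.isLt a⟩⟩
    ⟨((σ ^ Nat.find hex) ⟨a + r.val, hx⟩).val - a, by
      have h := Nat.find_spec hex; omega⟩
  else r

/-- `pr₁(σ)` for `σ ∈ S_{p+q}`: erase the letters `p+1,…,p+q` (first-return map to the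
first block) -/
noncomputable def pr1 {p q : ℕ} (σ : Equiv.Perm (Fin (p + q))) : Fin p → Fin p :=
  fun r => prBlock σ 0 r

/-- `pr₂(σ)` for `σ ∈ S_{p+q}`: erase the letters `1,…,p` and relabel -/
noncomputable def pr2 {p q : ℕ} (σ : Equiv.Perm (Fin (p + q))) : Fin q → Fin q :=
  fun r => prBlock σ p r

/-- `κ₁(σ)`: the number of cycles of `σ ∈ S_{p+q}` whose orbit is contained in
`{p+1,…,p+q}` -/
def kappa1 {p q : ℕ} (σ : Equiv.Perm (Fin (p + q))) : ℕ := kappaAway σ 0 p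

/-- `κ₂(σ)`: the number of cycles of `σ ∈ S_{p+q}` whose orbit is contained in
`{1,…,p}` -/
def kappa2 {p q : ℕ} (σ : Equiv.Perm (Fin (p + q))) : ℕ := kappaAway σ p q

/-- `H = U diag(λ) U†` -/
noncomputable def conjDiag {ι : Type*} [Fintype ι] [DecidableEq ι]
    (U : Matrix.unitaryGroup ι ℂ) (lam : ι → ℝ) : Matrix ι ι ℂ :=
  (U : Matrix ι ι ℂ) * Matrix.diagonal (fun x => (lam x : ℂ)) * star (U : Matrix ι ι ℂ)

/-- first marginal (partial trace over the second factor) -/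
noncomputable def marg1 {m n : ℕ} (M : Matrix (Fin m × Fin n) (Fin m × Fin n) ℂ) :
    Matrix (Fin m) (Fin m) ℂ :=
  fun i k => ∑ j : Fin n, M (i, j) (k, j)

/-- second marginal (partial trace over the first factor) -/
noncomputable def marg2 {m n : ℕ} (M : Matrix (Fin m × Fin n) (Fin m × Fin n) ℂ) :
    Matrix (Fin n) (Fin n) ℂ :=
  fun j l => ∑ i : Fin m, M (i, j) (i, l)

noncomputable instance unitaryGroupMeasurableSpace {ι : Type*} [Fintype ι] [DecidableEq ι] :
    MeasurableSpace (Matrix.unitaryGroup ι ℂ) := borel _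

end QMP

namespace QMP

section General

variable {d : ℕ} {β : Type*} [Fintype β] [DecidableEq β]

/-- first (forward) return of `x` to `P` under `σ`. -/
noncomputable def fret (σ : Equiv.Perm (Fin d)) (P : Fin d → Prop) [DecidablePred P]
    (x : Fin d) (hex : ∃ kk, 0 < kk ∧ P ((σ ^ kk) x)) : Fin d :=
  (σ ^ Nat.find hex) x

lemma ret_ex (σ : Equiv.Perm (Fin d)) (P : Fin d → Prop) {x : Fin d} (h : P x) :
    ∃ kk, 0 < kk ∧ P ((σ ^ kk) x) :=
  ⟨orderOf σ, orderOf_pos σ, by rw [pow_orderOf_eq_one]; simpa⟩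

lemma fret_mem (σ : Equiv.Perm (Fin d)) (P : Fin d → Prop) [DecidablePred P]
    (x : Fin d) (hex : ∃ kk, 0 < kk ∧ P ((σ ^ kk) x)) : P (fret σ P x hex) :=
  (Nat.find_spec hex).2

/-- the value `fill P u s x` is `u x` on `P` and `s x` off `P`. -/
def fill (P : Fin d → Prop) [DecidablePred P] (u : Fin d → β)
    (s : {x : Fin d // ¬ P x} → β) (x : Fin d) : β :=
  if h : P x then u x else s ⟨x, h⟩

/-- minimal representatives of cycles avoiding `P`. -/
def cycAvoid (σ : Equiv.Perm (Fin d)) (P : Fin d → Prop) [DecidablePred P] : Finset (Fin d) :=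
  univ.filter fun x => (∀ y, σ.SameCycle x y → x ≤ y) ∧ ∀ y, σ.SameCycle x y → ¬ P y

noncomputable def minRep (σ : Equiv.Perm (Fin d)) (x : Fin d) : Fin d :=
  (univ.filter fun y => σ.SameCycle x y).min' ⟨x, by simp [Equiv.Perm.SameCycle.refl]⟩

lemma minRep_sameCycle (σ : Equiv.Perm (Fin d)) (x : Fin d) : σ.SameCycle x (minRep σ x) := by
  have := Finset.min'_mem (univ.filter fun y => σ.SameCycle x y)
    ⟨x, by simp [Equiv.Perm.SameCycle.refl]⟩
  simpa [minRep] using (Finset.mem_filter.mp this).2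

lemma minRep_le (σ : Equiv.Perm (Fin d)) {x y : Fin d} (h : σ.SameCycle x y) :
    minRep σ x ≤ y :=
  Finset.min'_le _ _ (by simp [h])

lemma minRep_congr (σ : Equiv.Perm (Fin d)) {x y : Fin d} (h : σ.SameCycle x y) :
    minRep σ x = minRep σ y := by
  unfold minRep
  congr 1
  ext z
  simp only [mem_filter, mem_univ, true_and]
  exact ⟨fun hz => h.symm.trans hz, fun hz => h.trans hz⟩

lemma minRep_eq_self (σ : Equiv.Perm (Fin d)) {x : Fin d}
    (h : ∀ y, σ.SameCycle x y → x ≤ y) : minRep σ x = x :=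
  le_antisymm (minRep_le σ (Equiv.Perm.SameCycle.refl σ x)) (h _ (minRep_sameCycle σ x))

lemma meets_iff (σ : Equiv.Perm (Fin d)) (P : Fin d → Prop) (x : Fin d) :
    (∃ kk, 0 < kk ∧ P ((σ ^ kk) x)) ↔ ∃ y, σ.SameCycle x y ∧ P y := by
  constructor
  · rintro ⟨kk, _, h⟩
    exact ⟨(σ ^ kk) x, ⟨kk, by simp [zpow_natCast]⟩, h⟩
  · rintro ⟨y, hc, hP⟩
    obtain ⟨i, hi, rfl⟩ := hc.exists_pow_eq'
    rcases Nat.eq_zero_or_pos i with rfl | hpos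
    · simp only [pow_zero, Equiv.Perm.one_apply] at hP ⊢
      exact ⟨orderOf σ, orderOf_pos σ, by rw [pow_orderOf_eq_one]; simpa⟩
    · exact ⟨i, hpos, hP⟩

lemma minRep_mem_cycAvoid (σ : Equiv.Perm (Fin d)) (P : Fin d → Prop) [DecidablePred P]
    {x : Fin d} (hnex : ¬ ∃ kk, 0 < kk ∧ P ((σ ^ kk) x)) :
    minRep σ x ∈ cycAvoid σ P := by
  rw [cycAvoid, mem_filter]
  refine ⟨mem_univ _, fun y hy => ?_, fun y hy => fun hP => ?_⟩
  · exact minRep_le σ ((minRep_sameCycle σ x).trans hy)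
  · exact hnex ((meets_iff σ P x).mpr ⟨y, (minRep_sameCycle σ x).trans hy, hP⟩)

lemma mem_cycAvoid_not_P (σ : Equiv.Perm (Fin d)) (P : Fin d → Prop) [DecidablePred P]
    {x : Fin d} (hx : x ∈ cycAvoid σ P) : ¬ P x :=
  ((mem_filter.mp hx).2).2 x (Equiv.Perm.SameCycle.refl σ x)


variable {σ : Equiv.Perm (Fin d)} {P : Fin d → Prop} [DecidablePred P]
  {u v : Fin d → β} {s : {x : Fin d // ¬ P x} → β}

lemma chain (hC : ∀ r, fill P u s (σ r) = fill P v s r) :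
    ∀ kk, 0 < kk → ∀ x : Fin d, (∀ j, 0 < j → j < kk → ¬ P ((σ ^ j) x)) →
      fill P u s ((σ ^ kk) x) = fill P v s x := by
  intro kk
  induction kk with
  | zero => omega
  | succ k ih =>
    intro _ x hj
    have hstep : (σ ^ (k + 1)) x = σ ((σ ^ k) x) := by
      rw [pow_succ' σ k]; rfl
    rcases Nat.eq_zero_or_pos k with rfl | hk
    · rw [hstep]; simpa using hC x
    · have h1 : fill P u s ((σ ^ (k + 1)) x) = fill P v s ((σ ^ k) x) := by
        rw [hstep]; exact hC ((σ ^ k) x)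
      have hnP : ¬ P ((σ ^ k) x) := hj k hk (Nat.lt_succ_self k)
      have h2 : fill P v s ((σ ^ k) x) = fill P u s ((σ ^ k) x) := by
        simp [fill, hnP]
      rw [h1, h2, ih hk x (fun j hj1 hj2 => hj j hj1 (by omega))]

lemma chain_ret (hC : ∀ r, fill P u s (σ r) = fill P v s r)
    {x : Fin d} (hex : ∃ kk, 0 < kk ∧ P ((σ ^ kk) x)) :
    fill P u s (fret σ P x hex) = fill P v s x :=
  chain hC (Nat.find hex) (Nat.find_spec hex).1 x
    (fun j hj hlt hP => Nat.find_min hex hlt ⟨hj, hP⟩)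

lemma fill_of_mem {x : Fin d} (h : P x) : fill P u s x = u x := dif_pos h
lemma fill_of_not_mem {x : Fin d} (h : ¬ P x) : fill P u s x = s ⟨x, h⟩ := dif_neg h

lemma D_of_C (hC : ∀ r, fill P u s (σ r) = fill P v s r) {x : Fin d} (h : P x) :
    u (fret σ P x (ret_ex σ P h)) = v x := by
  have := chain_ret hC (ret_ex σ P h)
  rwa [fill_of_mem (fret_mem σ P x _), fill_of_mem h] at this

lemma fret_eq_apply {x : Fin d} (h1 : P (σ x)) (hex : ∃ kk, 0 < kk ∧ P ((σ ^ kk) x)) :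
    fret σ P x hex = σ x := by
  have : Nat.find hex = 1 := by
    have h2 : Nat.find hex ≤ 1 := Nat.find_le ⟨one_pos, by simpa using h1⟩
    have h3 := (Nat.find_spec hex).1
    omega
  rw [fret, this, pow_one]

lemma pow_apply_succ (σ : Equiv.Perm (Fin d)) (k : ℕ) (x : Fin d) :
    (σ ^ k) (σ x) = (σ ^ (k + 1)) x := by
  rw [pow_succ σ k]; rfl

lemma apply_pow_succ (σ : Equiv.Perm (Fin d)) (k : ℕ) (x : Fin d) :
    σ ((σ ^ k) x) = (σ ^ (k + 1)) x := by
  rw [pow_succ' σ k]; rfl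

lemma fret_succ {x : Fin d} (h1 : ¬ P (σ x)) (hex : ∃ kk, 0 < kk ∧ P ((σ ^ kk) x))
    (hex' : ∃ kk, 0 < kk ∧ P ((σ ^ kk) (σ x))) :
    fret σ P x hex = fret σ P (σ x) hex' := by
  have h2 : 2 ≤ Nat.find hex := by
    have hs := Nat.find_spec hex
    by_contra h
    have : Nat.find hex = 1 := by omega
    rw [this, pow_one] at hs
    exact h1 hs.2
  have hfind : Nat.find hex = Nat.find hex' + 1 := by
    apply le_antisymm
    · apply Nat.find_le
      refine ⟨by omega, ?_⟩
      rw [← pow_apply_succ]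
      exact (Nat.find_spec hex').2
    · have hle : Nat.find hex' ≤ Nat.find hex - 1 := by
        apply Nat.find_le
        refine ⟨by omega, ?_⟩
        rw [pow_apply_succ]
        have := (Nat.find_spec hex).2
        have heq : Nat.find hex - 1 + 1 = Nat.find hex := by omega
        rwa [heq]
      omega
  rw [fret, fret, hfind, ← pow_apply_succ]

lemma meets_succ {x : Fin d} (h1 : ¬ P (σ x)) (hex : ∃ kk, 0 < kk ∧ P ((σ ^ kk) x)) :
    ∃ kk, 0 < kk ∧ P ((σ ^ kk) (σ x)) := by
  have h2 : 2 ≤ Nat.find hex := by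
    have hs := Nat.find_spec hex
    by_contra h
    have : Nat.find hex = 1 := by omega
    rw [this, pow_one] at hs
    exact h1 hs.2
  refine ⟨Nat.find hex - 1, by omega, ?_⟩
  rw [pow_apply_succ]
  have := (Nat.find_spec hex).2
  have heq : Nat.find hex - 1 + 1 = Nat.find hex := by omega
  rwa [heq]

lemma meets_of_succ {x : Fin d} (hex' : ∃ kk, 0 < kk ∧ P ((σ ^ kk) (σ x))) :
    ∃ kk, 0 < kk ∧ P ((σ ^ kk) x) := by
  obtain ⟨kk, hk, h⟩ := hex'
  exact ⟨kk + 1, by omega, by rwa [← pow_apply_succ]⟩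

/-- constancy of `s` on cycles avoiding `P`. -/
lemma const_on_cycle (hC : ∀ r, fill P u s (σ r) = fill P v s r)
    {x : Fin d} (havoid : ∀ y, σ.SameCycle x y → ¬ P y) {z : Fin d}
    (hz : σ.SameCycle x z) (hx : ¬ P x) (hnz : ¬ P z) :
    s ⟨z, hnz⟩ = s ⟨x, hx⟩ := by
  obtain ⟨i, _, rfl⟩ := hz.exists_pow_eq'
  revert hnz
  induction i with
  | zero => intro hnz; exact congrArg s (Subtype.ext (show (σ ^ 0) x = x by rw [pow_zero]; rfl))
  | succ k ih =>
    intro hnz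
    have hsck : σ.SameCycle x ((σ ^ k) x) := ⟨k, by simp [zpow_natCast]⟩
    have hk : ¬ P ((σ ^ k) x) := havoid _ hsck
    have hk1 : ¬ P ((σ ^ (k + 1)) x) := havoid _ ⟨((k + 1 : ℕ) : ℤ), by rw [zpow_natCast]⟩
    have := hC ((σ ^ k) x)
    rw [fill_of_not_mem hk, apply_pow_succ, fill_of_not_mem hk1] at this
    rw [this]
    exact ih (by omega) hsck hk

theorem block_sum (σ : Equiv.Perm (Fin d)) (P : Fin d → Prop) [DecidablePred P]
    (u v : Fin d → β) :
    (∑ s : {x : Fin d // ¬ P x} → β,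
        (if ∀ r, fill P u s (σ r) = fill P v s r then (1 : ℝ) else 0))
    = (if ∀ (x : Fin d) (h : P x), u (fret σ P x (ret_ex σ P h)) = v x then (1 : ℝ) else 0)
      * (Fintype.card β : ℝ) ^ (cycAvoid σ P).card := by
  classical
  rw [Finset.sum_boole]
  by_cases hD : ∀ (x : Fin d) (h : P x), u (fret σ P x (ret_ex σ P h)) = v x
  · rw [if_pos hD, one_mul]
    norm_cast
    have hcard : Fintype.card ({x // x ∈ cycAvoid σ P} → β)
        = Fintype.card β ^ (cycAvoid σ P).card := by
      rw [Fintype.card_fun, Fintype.card_coe]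
    rw [← hcard, ← Finset.card_univ]
    -- bijection
    refine Finset.card_bij'
      (fun s _ => fun x => s ⟨x.1, mem_cycAvoid_not_P σ P x.2⟩)
      (fun c _ => fun x =>
        if hex : ∃ kk, 0 < kk ∧ P ((σ ^ kk) (x : Fin d)) then u (fret σ P x.1 hex)
        else c ⟨minRep σ x.1, minRep_mem_cycAvoid σ P hex⟩)
      (fun s _ => Finset.mem_univ _) ?_ ?_ ?_
    · -- G c ∈ filter C
      intro c _
      rw [Finset.mem_filter]
      refine ⟨Finset.mem_univ _, fun r => ?_⟩
      beta_reduce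
      set G : {x : Fin d // ¬ P x} → β := fun x =>
        if hex : ∃ kk, 0 < kk ∧ P ((σ ^ kk) (x : Fin d)) then u (fret σ P x.1 hex)
        else c ⟨minRep σ x.1, minRep_mem_cycAvoid σ P hex⟩ with hG
      by_cases hr : P r
      · rw [fill_of_mem hr]
        by_cases hsr : P (σ r)
        · rw [fill_of_mem hsr]
          have := hD r hr
          rwa [fret_eq_apply hsr] at this
        · rw [fill_of_not_mem hsr]
          have hex : ∃ kk, 0 < kk ∧ P ((σ ^ kk) r) := ret_ex σ P hr
          have hex' : ∃ kk, 0 < kk ∧ P ((σ ^ kk) (σ r)) := meets_succ hsr hex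
          have hGv : G ⟨σ r, hsr⟩ = u (fret σ P (σ r) hex') := by
            rw [hG]; exact dif_pos hex'
          rw [hGv, ← fret_succ hsr hex hex']
          exact hD r hr
      · rw [fill_of_not_mem hr]
        by_cases hsr : P (σ r)
        · rw [fill_of_mem hsr]
          have hex : ∃ kk, 0 < kk ∧ P ((σ ^ kk) r) := ⟨1, one_pos, by simpa using hsr⟩
          have hGv : G ⟨r, hr⟩ = u (fret σ P r hex) := by rw [hG]; exact dif_pos hex
          rw [hGv, fret_eq_apply hsr]
        · rw [fill_of_not_mem hsr]
          by_cases hex : ∃ kk, 0 < kk ∧ P ((σ ^ kk) r)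
          · have hex' := meets_succ hsr hex
            have h1 : G ⟨σ r, hsr⟩ = u (fret σ P (σ r) hex') := by
              rw [hG]; exact dif_pos hex'
            have h2 : G ⟨r, hr⟩ = u (fret σ P r hex) := by rw [hG]; exact dif_pos hex
            rw [h1, h2, fret_succ hsr hex hex']
          · have hex' : ¬ ∃ kk, 0 < kk ∧ P ((σ ^ kk) (σ r)) :=
              fun h => hex (meets_of_succ h)
            have h1 : G ⟨σ r, hsr⟩ = c ⟨minRep σ (σ r), minRep_mem_cycAvoid σ P hex'⟩ := by
              rw [hG]; exact dif_neg hex'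
            have h2 : G ⟨r, hr⟩ = c ⟨minRep σ r, minRep_mem_cycAvoid σ P hex⟩ := by
              rw [hG]; exact dif_neg hex
            rw [h1, h2]
            exact congrArg c (Subtype.ext (minRep_congr σ ⟨1, by simp⟩).symm)
    · -- G (F s) = s
      intro s hs
      rw [Finset.mem_filter] at hs
      have hC := hs.2
      funext x
      beta_reduce
      by_cases hex : ∃ kk, 0 < kk ∧ P ((σ ^ kk) (x : Fin d))
      · simp only [dif_pos hex]
        have := chain_ret hC hex
        rw [fill_of_mem (fret_mem σ P x.1 hex), fill_of_not_mem x.2] at this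
        rw [this]
      · simp only [dif_neg hex]
        have havoid : ∀ y, σ.SameCycle x.1 y → ¬ P y := by
          intro y hy hP
          exact hex ((meets_iff σ P x.1).mpr ⟨y, hy, hP⟩)
        exact const_on_cycle hC havoid (minRep_sameCycle σ x.1)
          x.2 (mem_cycAvoid_not_P σ P (minRep_mem_cycAvoid σ P hex))
    · -- F (G c) = c
      intro c _
      funext x
      beta_reduce
      have hx := x.2
      simp only [cycAvoid, Finset.mem_filter] at hx
      have hnex : ¬ ∃ kk, 0 < kk ∧ P ((σ ^ kk) (x : Fin d)) := by
        intro h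
        obtain ⟨y, hy, hP⟩ := (meets_iff σ P x.1).mp h
        exact hx.2.2 y hy hP
      simp only [dif_neg hnex]
      exact congrArg c (Subtype.ext (minRep_eq_self σ hx.2.1))
  · rw [if_neg hD, zero_mul]
    norm_cast
    rw [Finset.card_eq_zero, Finset.filter_eq_empty_iff]
    intro s _
    intro hC
    exact hD (fun x h => D_of_C hC h)

end General

section Bridge

lemma nat_find_congr {p q : ℕ → Prop} [DecidablePred p] [DecidablePred q]
    (hp : ∃ n, p n) (hq : ∃ n, q n) (h : ∀ n, p n ↔ q n) : Nat.find hp = Nat.find hq :=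
  le_antisymm (Nat.find_le ((h _).mpr (Nat.find_spec hq)))
    (Nat.find_le ((h _).mp (Nat.find_spec hp)))

lemma fret_congr {d : ℕ} (σ : Equiv.Perm (Fin d)) (P : Fin d → Prop) [DecidablePred P]
    {x y : Fin d} (hxy : x = y) (hex : ∃ kk, 0 < kk ∧ P ((σ ^ kk) x))
    (hey : ∃ kk, 0 < kk ∧ P ((σ ^ kk) y)) : fret σ P x hex = fret σ P y hey := by
  subst hxy; rfl

lemma prBlock_val_eq {d : ℕ} (σ : Equiv.Perm (Fin d)) (a : ℕ) {s : ℕ} (hd : a + s ≤ d)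
    (r : Fin s) (P : Fin d → Prop) [DecidablePred P]
    (hP : ∀ y : Fin d, P y ↔ a ≤ y.val ∧ y.val < a + s)
    (hlt : a + r.val < d) (hex : ∃ kk, 0 < kk ∧ P ((σ ^ kk) (⟨a + r.val, hlt⟩ : Fin d))) :
    ((prBlock σ a r) : ℕ) = (fret σ P ⟨a + r.val, hlt⟩ hex).val - a := by
  rw [prBlock, dif_pos hd]
  dsimp only
  have hfind : ∀ (h1 : ∃ kk : ℕ, 0 < kk ∧ a ≤ ((σ ^ kk) (⟨a + r.val, hlt⟩ : Fin d)).val ∧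
      ((σ ^ kk) (⟨a + r.val, hlt⟩ : Fin d)).val < a + s), Nat.find h1 = Nat.find hex := by
    intro h1
    refine nat_find_congr h1 hex (fun n => and_congr_right fun _ => (hP _).symm)
  rw [hfind]
  rfl

end Bridge


section Spec

/-- the first-block predicate -/
def Pfst (p q : ℕ) : Fin (p + q) → Prop := fun x => x.val < p

instance (p q : ℕ) : DecidablePred (Pfst p q) := fun _ => Nat.decLt _ _

/-- the second-block predicate -/
def Psnd (p q : ℕ) : Fin (p + q) → Prop := fun x => p ≤ x.val ∧ x.val < p + q

instance (p q : ℕ) : DecidablePred (Psnd p q) := fun _ => instDecidableAnd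

def blockEquiv1 (p q : ℕ) : {x : Fin (p + q) // ¬ Pfst p q x} ≃ Fin q where
  toFun x := ⟨x.1.val - p, by have h1 := x.1.isLt; have h2 := x.2; unfold Pfst at h2; omega⟩
  invFun r := ⟨⟨p + r.val, by have := r.isLt; omega⟩,
    show ¬ (p + r.val < p) from Nat.not_lt.mpr (Nat.le_add_right p r.val)⟩
  left_inv x := Subtype.ext (Fin.ext (show p + (x.1.val - p) = x.1.val by
    have h2 := x.2; unfold Pfst at h2; omega))
  right_inv r := Fin.ext (show p + r.val - p = r.val by omega)

def blockEquiv2 (p q : ℕ) : {x : Fin (p + q) // ¬ Psnd p q x} ≃ Fin p where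
  toFun x := ⟨x.1.val, by have h1 := x.1.isLt; have h2 := x.2; unfold Psnd at h2; omega⟩
  invFun t := ⟨⟨t.val, by have := t.isLt; omega⟩,
    show ¬ (p ≤ t.val ∧ t.val < p + q) by have := t.isLt; omega⟩
  left_inv x := Subtype.ext (Fin.ext rfl)
  right_inv t := Fin.ext rfl

def uFun {m : ℕ} (p q : ℕ) (i : Fin p → Fin m) (i0 : Fin m) : Fin (p + q) → Fin m :=
  fun x => if h : x.val < p then i ⟨x.val, h⟩ else i0

lemma uFun_apply {m p q : ℕ} (i : Fin p → Fin m) (i0 : Fin m) (x : Fin (p + q))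
    (h : x.val < p) : uFun p q i i0 x = i ⟨x.val, h⟩ := dif_pos h

def uFun2 {n : ℕ} (p q : ℕ) (j : Fin q → Fin n) (j0 : Fin n) : Fin (p + q) → Fin n :=
  fun x => if h : p ≤ x.val ∧ x.val < p + q then j ⟨x.val - p, by omega⟩ else j0

lemma uFun2_apply {n p q : ℕ} (j : Fin q → Fin n) (j0 : Fin n) (x : Fin (p + q))
    (h : p ≤ x.val ∧ x.val < p + q) :
    uFun2 p q j j0 x = j ⟨x.val - p, by omega⟩ := dif_pos h

lemma fill_append1 {m p q : ℕ} (i : Fin p → Fin m) (i0 : Fin m)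
    (s' : {x : Fin (p + q) // ¬ Pfst p q x} → Fin m) :
    Fin.append i (fun b => s' ((blockEquiv1 p q).symm b)) = fill (Pfst p q) (uFun p q i i0) s' := by
  funext x
  induction x using Fin.addCases with
  | left a =>
    rw [Fin.append_left]
    have ha : Pfst p q (Fin.castAdd q a) := a.isLt
    rw [fill_of_mem ha, uFun_apply i i0 _ ha]
    exact congrArg i (Fin.ext rfl)
  | right b =>
    rw [Fin.append_right]
    have hb : ¬ Pfst p q (Fin.natAdd p b) :=
      show ¬ (p + b.val < p) from Nat.not_lt.mpr (Nat.le_add_right p b.val)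
    rw [fill_of_not_mem hb]
    exact congrArg s' (Subtype.ext (Fin.ext rfl))

lemma fill_append2 {n p q : ℕ} (j : Fin q → Fin n) (j0 : Fin n)
    (t' : {x : Fin (p + q) // ¬ Psnd p q x} → Fin n) :
    Fin.append (fun a => t' ((blockEquiv2 p q).symm a)) j
      = fill (Psnd p q) (uFun2 p q j j0) t' := by
  funext x
  induction x using Fin.addCases with
  | left a =>
    rw [Fin.append_left]
    have ha : ¬ Psnd p q (Fin.castAdd q a) := by
      show ¬ (p ≤ a.val ∧ a.val < p + q)
      have := a.isLt; omega
    rw [fill_of_not_mem ha]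
    exact congrArg t' (Subtype.ext (Fin.ext rfl))
  | right b =>
    rw [Fin.append_right]
    have hb : Psnd p q (Fin.natAdd p b) := by
      show p ≤ p + b.val ∧ p + b.val < p + q
      have := b.isLt; omega
    rw [fill_of_mem hb, uFun2_apply j j0 _ hb]
    exact congrArg j (Fin.ext (show (b : ℕ) = p + b.val - p by omega))

lemma kappa1_eq {p q : ℕ} (σ : Equiv.Perm (Fin (p + q))) :
    kappa1 σ = (cycAvoid σ (Pfst p q)).card := by
  unfold kappa1 kappaAway cycAvoid
  congr 1
  apply Finset.filter_congr
  intro x _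
  refine and_congr_right fun _ => forall_congr' fun y => imp_congr_right fun _ => ?_
  unfold Pfst; omega

lemma kappa2_eq {p q : ℕ} (σ : Equiv.Perm (Fin (p + q))) :
    kappa2 σ = (cycAvoid σ (Psnd p q)).card := by
  unfold kappa2 kappaAway cycAvoid
  congr 1
  apply Finset.filter_congr
  intro x _
  refine and_congr_right fun _ => forall_congr' fun y => imp_congr_right fun _ => ?_
  unfold Psnd; omega

lemma cond1_iff {m p q : ℕ} (i k : Fin p → Fin m) (i0 k0 : Fin m)
    (σ : Equiv.Perm (Fin (p + q))) :
    (∀ (x : Fin (p + q)) (h : Pfst p q x),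
        uFun p q i i0 (fret σ (Pfst p q) x (ret_ex σ (Pfst p q) h)) = uFun p q k k0 x)
    ↔ ∀ r : Fin p, i (pr1 σ r) = k r := by
  have hP : ∀ y : Fin (p + q), Pfst p q y ↔ 0 ≤ y.val ∧ y.val < 0 + p := fun y => by
    unfold Pfst; omega
  constructor
  · intro H r
    have hlt : 0 + r.val < p + q := by have := r.isLt; omega
    have hx : Pfst p q (⟨0 + r.val, hlt⟩ : Fin (p + q)) := show 0 + r.val < p by
      have := r.isLt; omega
    have hex := ret_ex σ (Pfst p q) hx
    have hb := prBlock_val_eq σ 0 (show 0 + p ≤ p + q by omega) r (Pfst p q) hP hlt hex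
    have hu := H _ hx
    have hfm : Pfst p q (fret σ (Pfst p q) ⟨0 + r.val, hlt⟩ hex) := fret_mem σ _ _ hex
    rw [uFun_apply i i0 _ hfm, uFun_apply k k0 _ hx] at hu
    have h1 : pr1 σ r = ⟨(fret σ (Pfst p q) ⟨0 + r.val, hlt⟩ hex).val, hfm⟩ := by
      apply Fin.ext
      show (prBlock σ 0 r).val = _
      rw [hb]
      exact Nat.sub_zero _
    have h2 : (⟨(⟨0 + r.val, hlt⟩ : Fin (p + q)).val, hx⟩ : Fin p) = r :=
      Fin.ext (show 0 + r.val = r.val by omega)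
    exact (congrArg i h1).trans (hu.trans (congrArg k h2))
  · intro H x hx
    have hxval : x.val < p := hx
    have hlt : 0 + x.val < p + q := by have := x.isLt; omega
    set r : Fin p := ⟨x.val, hxval⟩ with hr
    have hxx : (⟨0 + r.val, hlt⟩ : Fin (p + q)) = x := Fin.ext (show 0 + x.val = x.val by omega)
    have hx' : Pfst p q (⟨0 + r.val, hlt⟩ : Fin (p + q)) := hxx ▸ hx
    have hex' := ret_ex σ (Pfst p q) hx'
    have hb := prBlock_val_eq σ 0 (show 0 + p ≤ p + q by omega) r (Pfst p q) hP hlt hex'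
    have hfr : fret σ (Pfst p q) x (ret_ex σ (Pfst p q) hx)
        = fret σ (Pfst p q) ⟨0 + r.val, hlt⟩ hex' := fret_congr σ _ hxx.symm _ _
    rw [hfr]
    have hfm : Pfst p q (fret σ (Pfst p q) ⟨0 + r.val, hlt⟩ hex') := fret_mem σ _ _ hex'
    rw [uFun_apply i i0 _ hfm, uFun_apply k k0 _ hx]
    have hgoal := H r
    have h1 : (⟨(fret σ (Pfst p q) ⟨0 + r.val, hlt⟩ hex').val, hfm⟩ : Fin p) = pr1 σ r := by
      apply Fin.ext
      show _ = (prBlock σ 0 r).val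
      rw [hb]
      exact (Nat.sub_zero _).symm
    have h2 : (⟨x.val, hx⟩ : Fin p) = r := Fin.ext rfl
    exact (congrArg i h1).trans (hgoal.trans (congrArg k h2.symm))

lemma cond2_iff {n p q : ℕ} (j l : Fin q → Fin n) (j0 l0 : Fin n)
    (σ : Equiv.Perm (Fin (p + q))) :
    (∀ (x : Fin (p + q)) (h : Psnd p q x),
        uFun2 p q j j0 (fret σ (Psnd p q) x (ret_ex σ (Psnd p q) h)) = uFun2 p q l l0 x)
    ↔ ∀ r : Fin q, j (pr2 σ r) = l r := by
  have hP : ∀ y : Fin (p + q), Psnd p q y ↔ p ≤ y.val ∧ y.val < p + q := fun y => Iff.rfl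
  constructor
  · intro H r
    have hlt : p + r.val < p + q := by have := r.isLt; omega
    have hx : Psnd p q (⟨p + r.val, hlt⟩ : Fin (p + q)) :=
      ⟨Nat.le_add_right p r.val, hlt⟩
    have hex := ret_ex σ (Psnd p q) hx
    have hb := prBlock_val_eq σ p (le_refl (p + q)) r (Psnd p q) hP hlt hex
    have hu := H _ hx
    have hfm : Psnd p q (fret σ (Psnd p q) ⟨p + r.val, hlt⟩ hex) := fret_mem σ _ _ hex
    rw [uFun2_apply j j0 _ hfm, uFun2_apply l l0 _ hx] at hu
    have h1 : pr2 σ r = ⟨(fret σ (Psnd p q) ⟨p + r.val, hlt⟩ hex).val - p, by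
        have := hfm.2; have := hfm.1; omega⟩ := by
      exact Fin.ext hb
    have h2 : (⟨(⟨p + r.val, hlt⟩ : Fin (p + q)).val - p, by omega⟩ : Fin q) = r :=
      Fin.ext (show p + r.val - p = r.val by omega)
    exact (congrArg j h1).trans (hu.trans (congrArg l h2))
  · intro H x hx
    have hlt : p + (x.val - p) < p + q := by have := x.isLt; have := hx.1; omega
    set r : Fin q := ⟨x.val - p, by have := x.isLt; have := hx.1; omega⟩ with hr
    have hxx : (⟨p + r.val, hlt⟩ : Fin (p + q)) = x :=
      Fin.ext (show p + (x.val - p) = x.val by have := hx.1; omega)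
    have hx' : Psnd p q (⟨p + r.val, hlt⟩ : Fin (p + q)) := hxx ▸ hx
    have hex' := ret_ex σ (Psnd p q) hx'
    have hb := prBlock_val_eq σ p (le_refl (p + q)) r (Psnd p q) hP hlt hex'
    have hfr : fret σ (Psnd p q) x (ret_ex σ (Psnd p q) hx)
        = fret σ (Psnd p q) ⟨p + r.val, hlt⟩ hex' := fret_congr σ _ hxx.symm _ _
    rw [hfr]
    have hfm : Psnd p q (fret σ (Psnd p q) ⟨p + r.val, hlt⟩ hex') := fret_mem σ _ _ hex'
    rw [uFun2_apply j j0 _ hfm, uFun2_apply l l0 _ hx]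
    have hgoal := H r
    have h1 : (⟨(fret σ (Psnd p q) ⟨p + r.val, hlt⟩ hex').val - p, by
        have := hfm.2; have := hfm.1; omega⟩ : Fin q) = pr2 σ r := by
      exact Fin.ext hb.symm
    have h2 : (⟨x.val - p, by have := x.isLt; have := hx.1; omega⟩ : Fin q) = r := Fin.ext rfl
    exact (congrArg j h1).trans (hgoal.trans (congrArg l h2.symm))

end Spec

/-- **Key lemma**: summing the delta functions over the free indices produces the
first-return permutation delta times the appropriate power of the dimension. -/
theorem delta_sum_lemma
    {m n : ℕ} (hm : 2 ≤ m) (hn : 2 ≤ n) {p q : ℕ} (hpq : 1 ≤ p + q)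
    (i k : Fin p → Fin m) (j l : Fin q → Fin n)
    (σ : Equiv.Perm (Fin (p + q))) :
    (∑ s : Fin q → Fin m,
        deltaFun (⇑σ) (Fin.append i s) (Fin.append k s)
      = deltaFun (pr1 σ) i k * (m : ℝ) ^ kappa1 σ) ∧
    (∑ t : Fin p → Fin n,
        deltaFun (⇑σ) (Fin.append t j) (Fin.append t l)
      = deltaFun (pr2 σ) j l * (n : ℝ) ^ kappa2 σ) := by
  constructor
  · -- part 1
    have hm0 : 0 < m := by omega
    have hsum : ∑ s : Fin q → Fin m, deltaFun (⇑σ) (Fin.append i s) (Fin.append k s)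
        = ∑ s' : {x : Fin (p + q) // ¬ Pfst p q x} → Fin m,
            (if ∀ r, fill (Pfst p q) (uFun p q i ⟨0, hm0⟩) s' (σ r)
                = fill (Pfst p q) (uFun p q k ⟨0, hm0⟩) s' r then (1 : ℝ) else 0) := by
      refine (Fintype.sum_equiv (Equiv.arrowCongr (blockEquiv1 p q) (Equiv.refl (Fin m)))
        _ _ fun s' => ?_).symm
      have he : (Equiv.arrowCongr (blockEquiv1 p q) (Equiv.refl (Fin m))) s'
          = fun b => s' ((blockEquiv1 p q).symm b) := by
        funext b
        simp [Equiv.arrowCongr]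
      rw [he, deltaFun, fill_append1 i ⟨0, hm0⟩ s', fill_append1 k ⟨0, hm0⟩ s']
    rw [hsum, block_sum σ (Pfst p q) (uFun p q i ⟨0, hm0⟩) (uFun p q k ⟨0, hm0⟩), deltaFun,
      Fintype.card_fin, kappa1_eq]
    congr 1
    exact if_congr (cond1_iff i k ⟨0, hm0⟩ ⟨0, hm0⟩ σ) rfl rfl
  · -- part 2
    have hn0 : 0 < n := by omega
    have hsum : ∑ t : Fin p → Fin n, deltaFun (⇑σ) (Fin.append t j) (Fin.append t l)
        = ∑ t' : {x : Fin (p + q) // ¬ Psnd p q x} → Fin n,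
            (if ∀ r, fill (Psnd p q) (uFun2 p q j ⟨0, hn0⟩) t' (σ r)
                = fill (Psnd p q) (uFun2 p q l ⟨0, hn0⟩) t' r then (1 : ℝ) else 0) := by
      refine (Fintype.sum_equiv (Equiv.arrowCongr (blockEquiv2 p q) (Equiv.refl (Fin n)))
        _ _ fun t' => ?_).symm
      have he : (Equiv.arrowCongr (blockEquiv2 p q) (Equiv.refl (Fin n))) t'
          = fun a => t' ((blockEquiv2 p q).symm a) := by
        funext a
        simp [Equiv.arrowCongr]
      rw [he, deltaFun, fill_append2 j ⟨0, hn0⟩ t', fill_append2 l ⟨0, hn0⟩ t']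
    rw [hsum, block_sum σ (Psnd p q) (uFun2 p q j ⟨0, hn0⟩) (uFun2 p q l ⟨0, hn0⟩), deltaFun,
      Fintype.card_fin, kappa2_eq]
    congr 1
    exact if_congr (cond2_iff j l ⟨0, hn0⟩ ⟨0, hn0⟩ σ) rfl rfl

end QMP
end

section
/- For all i, k ∈ {1,…,m} and j, l ∈ {1,…,n}, 𝔼[ π₁(H)_{i,k} · π₂(H)_{j,l} ] = δ(i,k) · δ(j,l) · (mn)^{-1} · (Tr λ)², where Tr λ = λ_{11} + λ_{12} + ⋯ + λ_{mn} and δ(·,·) is the Kronecker delta. -/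
open MeasureTheory Finset

namespace QMP

section Aux

variable {ι : Type*} [Fintype ι] [DecidableEq ι]

instance : BorelSpace (Matrix.unitaryGroup ι ℂ) := ⟨rfl⟩

example : MeasurableMul (Matrix.unitaryGroup ι ℂ) := inferInstance

lemma conjDiag_mul (V U : Matrix.unitaryGroup ι ℂ) (lam : ι → ℝ) :
    conjDiag (V * U) lam
      = (V : Matrix ι ι ℂ) * conjDiag U lam * star (V : Matrix ι ι ℂ) := by
  simp only [conjDiag, Matrix.UnitaryGroup.mul_val, star_mul, mul_assoc]

lemma conjDiag_apply (U : Matrix.unitaryGroup ι ℂ) (lam : ι → ℝ) (a b : ι) :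
    conjDiag U lam a b
      = ∑ c, (U : Matrix ι ι ℂ) a c * (lam c : ℂ) * star ((U : Matrix ι ι ℂ) b c) := by
  simp [conjDiag, Matrix.mul_apply, Matrix.diagonal_apply, Matrix.star_apply, ite_mul,
    zero_mul, mul_ite, mul_zero, Finset.sum_ite_eq, Finset.sum_ite_eq']

lemma norm_conjDiag_le (U : Matrix.unitaryGroup ι ℂ) (lam : ι → ℝ) (a b : ι) :
    ‖conjDiag U lam a b‖ ≤ ∑ c, |lam c| := by
  rw [conjDiag_apply]
  refine (norm_sum_le _ _).trans (Finset.sum_le_sum fun c _ => ?_)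
  rw [norm_mul, norm_mul, norm_star]
  have h1 := entry_norm_bound_of_unitary U.2 a c
  have h2 := entry_norm_bound_of_unitary U.2 b c
  have h3 : ‖((lam c : ℝ) : ℂ)‖ = |lam c| := by
    rw [Complex.norm_real, Real.norm_eq_abs]
  rw [h3]
  calc ‖(U : Matrix ι ι ℂ) a c‖ * |lam c| * ‖(U : Matrix ι ι ℂ) b c‖
      ≤ 1 * |lam c| * 1 := by gcongr
    _ = |lam c| := by ring

lemma integral_conj_unitary (μU : Measure (Matrix.unitaryGroup ι ℂ))
    [μU.IsMulLeftInvariant] (lam : ι → ℝ) (F : Matrix ι ι ℂ → ℂ)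
    (V : Matrix.unitaryGroup ι ℂ) :
    ∫ U, F (conjDiag U lam) ∂μU
      = ∫ U, F ((V : Matrix ι ι ℂ) * conjDiag U lam * star (V : Matrix ι ι ℂ)) ∂μU := by
  simp_rw [← conjDiag_mul]
  exact (integral_mul_left_eq_self (fun U => F (conjDiag U lam)) V).symm

lemma diag_conj_apply (d : ι → ℂ) (M : Matrix ι ι ℂ) (a b : ι) :
    (Matrix.diagonal d * M * star (Matrix.diagonal d)) a b = d a * M a b * star (d b) := by
  rw [Matrix.star_eq_conjTranspose, Matrix.diagonal_conjTranspose, Matrix.mul_diagonal,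
    Matrix.diagonal_mul]
  simp [mul_assoc]

lemma diag_mem (d : ι → ℂ) (hd : ∀ x, d x * star (d x) = 1) :
    Matrix.diagonal d ∈ Matrix.unitaryGroup ι ℂ := by
  rw [Matrix.mem_unitaryGroup_iff, Matrix.star_eq_conjTranspose, Matrix.diagonal_conjTranspose,
    Matrix.diagonal_mul_diagonal]
  have : (fun x => d x * star d x) = fun _ => (1 : ℂ) := funext fun x => hd x
  rw [this, ← Matrix.diagonal_one]

/-- the permutation matrix of `τ` -/
def permMat (τ : Equiv.Perm ι) : Matrix ι ι ℂ := fun x y => if τ y = x then 1 else 0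

lemma permMat_mem (τ : Equiv.Perm ι) : permMat τ ∈ Matrix.unitaryGroup ι ℂ := by
  rw [Matrix.mem_unitaryGroup_iff]
  ext x y
  simp only [Matrix.mul_apply, Matrix.star_apply, permMat, apply_ite (star : ℂ → ℂ), star_one, star_zero,
    ite_mul, one_mul, zero_mul, Matrix.one_apply, Equiv.apply_eq_iff_eq_symm_apply]
  simp [Finset.sum_ite_eq', Equiv.symm_apply_eq]

lemma perm_conj_apply (τ : Equiv.Perm ι) (M : Matrix ι ι ℂ) (x y : ι) :
    (permMat τ * M * star (permMat τ)) x y = M (τ.symm x) (τ.symm y) := by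
  simp only [Matrix.mul_apply, Matrix.star_apply, permMat, apply_ite (star : ℂ → ℂ), star_one, star_zero,
    ite_mul, one_mul, zero_mul, mul_ite, mul_one, mul_zero,
    Equiv.apply_eq_iff_eq_symm_apply]
  simp [Finset.sum_ite_eq', Finset.sum_ite_eq]

lemma trace_conjDiag (U : Matrix.unitaryGroup ι ℂ) (lam : ι → ℝ) :
    ∑ x, conjDiag U lam x x = ((∑ x, lam x : ℝ) : ℂ) := by
  have h : ∑ x, conjDiag U lam x x = Matrix.trace (conjDiag U lam) := rfl
  rw [h, conjDiag, Matrix.trace_mul_cycle, Matrix.UnitaryGroup.star_mul_self,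
    one_mul, Matrix.trace_diagonal]
  push_cast
  rfl

end Aux

section Marg

variable {m n : ℕ}

lemma sum_marg1_diag (M : Matrix (Fin m × Fin n) (Fin m × Fin n) ℂ) :
    ∑ i, marg1 M i i = ∑ x, M x x := by
  simp [marg1, Fintype.sum_prod_type]

lemma sum_marg2_diag (M : Matrix (Fin m × Fin n) (Fin m × Fin n) ℂ) :
    ∑ j, marg2 M j j = ∑ x, M x x := by
  rw [Fintype.sum_prod_type, Finset.sum_comm]
  simp [marg2]

lemma continuous_moment (lam : Fin m × Fin n → ℝ) (i k : Fin m) (j l : Fin n) :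
    Continuous fun U : Matrix.unitaryGroup (Fin m × Fin n) ℂ =>
      marg1 (conjDiag U lam) i k * marg2 (conjDiag U lam) j l := by
  have hC : Continuous fun U : Matrix.unitaryGroup (Fin m × Fin n) ℂ => conjDiag U lam :=
    (continuous_subtype_val.matrix_mul continuous_const).matrix_mul continuous_subtype_val.star
  exact (continuous_finset_sum _ fun j' _ => hC.matrix_elem _ _).mul
    (continuous_finset_sum _ fun i' _ => hC.matrix_elem _ _)

set_option synthInstance.maxHeartbeats 1000000 in
lemma integrable_moment (lam : Fin m × Fin n → ℝ)
    (μU : Measure (Matrix.unitaryGroup (Fin m × Fin n) ℂ)) [IsProbabilityMeasure μU]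
    (i k : Fin m) (j l : Fin n) :
    Integrable (fun U => marg1 (conjDiag U lam) i k * marg2 (conjDiag U lam) j l) μU := by
  set L := ∑ c, |lam c| with hLdef
  have hL : 0 ≤ L := Finset.sum_nonneg fun c _ => abs_nonneg _
  refine Integrable.mono' (integrable_const ((n * L) * (m * L)))
    (continuous_moment lam i k j l).aestronglyMeasurable
    (Filter.Eventually.of_forall fun U => ?_)
  rw [norm_mul]
  have h1 : ‖marg1 (conjDiag U lam) i k‖ ≤ n * L := by
    refine (norm_sum_le _ _).trans ?_
    calc ∑ j' : Fin n, ‖conjDiag U lam (i, j') (k, j')‖ ≤ ∑ _j' : Fin n, L :=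
          Finset.sum_le_sum fun j' _ => norm_conjDiag_le U lam _ _
      _ = n * L := by simp [mul_comm]
  have h2 : ‖marg2 (conjDiag U lam) j l‖ ≤ m * L := by
    refine (norm_sum_le _ _).trans ?_
    calc ∑ _i' : Fin m, ‖conjDiag U lam (_i', j) (_i', l)‖ ≤ ∑ _i' : Fin m, L :=
          Finset.sum_le_sum fun i' _ => norm_conjDiag_le U lam _ _
      _ = m * L := by simp [mul_comm]
  exact mul_le_mul h1 h2 (norm_nonneg _) (by positivity)

end Marg

section Cases

variable {ι : Type*} [Fintype ι] [DecidableEq ι]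

lemma integral_conj_unitary' (μU : Measure (Matrix.unitaryGroup ι ℂ))
    [μU.IsMulLeftInvariant] (lam : ι → ℝ) (F : Matrix ι ι ℂ → ℂ)
    (V : Matrix ι ι ℂ) (hV : V ∈ Matrix.unitaryGroup ι ℂ) :
    ∫ U, F (conjDiag U lam) ∂μU
      = ∫ U, F (V * conjDiag U lam * star V) ∂μU :=
  integral_conj_unitary μU lam F ⟨V, hV⟩

variable {m n : ℕ} (lam : Fin m × Fin n → ℝ)
variable (μU : Measure (Matrix.unitaryGroup (Fin m × Fin n) ℂ)) [μU.IsMulLeftInvariant]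

lemma moment_zero_left {i k : Fin m} (hik : i ≠ k) (j l : Fin n) :
    ∫ U, marg1 (conjDiag U lam) i k * marg2 (conjDiag U lam) j l ∂μU = 0 := by
  set d : Fin m × Fin n → ℂ := fun x => if x.1 = i then -1 else 1 with hd
  have hdmem : Matrix.diagonal d ∈ Matrix.unitaryGroup (Fin m × Fin n) ℂ := by
    refine diag_mem d fun x => ?_
    by_cases h : x.1 = i <;> simp [hd, h]
  have key := integral_conj_unitary' μU lam (fun M => marg1 M i k * marg2 M j l)
      (Matrix.diagonal d) hdmem
  have hpt : ∀ M : Matrix (Fin m × Fin n) (Fin m × Fin n) ℂ,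
      marg1 (Matrix.diagonal d * M * star (Matrix.diagonal d)) i k
        * marg2 (Matrix.diagonal d * M * star (Matrix.diagonal d)) j l
      = -(marg1 M i k * marg2 M j l) := by
    intro M
    have h1 : marg1 (Matrix.diagonal d * M * star (Matrix.diagonal d)) i k
        = - marg1 M i k := by
      simp only [marg1, ← Finset.sum_neg_distrib]
      refine Finset.sum_congr rfl fun j' _ => ?_
      rw [diag_conj_apply]
      have hi : d (i, j') = -1 := by simp [hd]
      have hk : d (k, j') = 1 := by simp [hd, Ne.symm hik]
      rw [hi, hk]
      simp
    have h2 : marg2 (Matrix.diagonal d * M * star (Matrix.diagonal d)) j l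
        = marg2 M j l := by
      simp only [marg2]
      refine Finset.sum_congr rfl fun i' _ => ?_
      rw [diag_conj_apply]
      by_cases h : i' = i <;> simp [hd, h]
    rw [h1, h2]; ring
  simp only [hpt] at key
  rw [integral_neg] at key
  linear_combination key / 2

lemma moment_zero_right (i k : Fin m) {j l : Fin n} (hjl : j ≠ l) :
    ∫ U, marg1 (conjDiag U lam) i k * marg2 (conjDiag U lam) j l ∂μU = 0 := by
  set d : Fin m × Fin n → ℂ := fun x => if x.2 = j then -1 else 1 with hd
  have hdmem : Matrix.diagonal d ∈ Matrix.unitaryGroup (Fin m × Fin n) ℂ := by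
    refine diag_mem d fun x => ?_
    by_cases h : x.2 = j <;> simp [hd, h]
  have key := integral_conj_unitary' μU lam (fun M => marg1 M i k * marg2 M j l)
      (Matrix.diagonal d) hdmem
  have hpt : ∀ M : Matrix (Fin m × Fin n) (Fin m × Fin n) ℂ,
      marg1 (Matrix.diagonal d * M * star (Matrix.diagonal d)) i k
        * marg2 (Matrix.diagonal d * M * star (Matrix.diagonal d)) j l
      = -(marg1 M i k * marg2 M j l) := by
    intro M
    have h1 : marg1 (Matrix.diagonal d * M * star (Matrix.diagonal d)) i k
        = marg1 M i k := by
      simp only [marg1]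
      refine Finset.sum_congr rfl fun j' _ => ?_
      rw [diag_conj_apply]
      by_cases h : j' = j <;> simp [hd, h]
    have h2 : marg2 (Matrix.diagonal d * M * star (Matrix.diagonal d)) j l
        = - marg2 M j l := by
      simp only [marg2, ← Finset.sum_neg_distrib]
      refine Finset.sum_congr rfl fun i' _ => ?_
      rw [diag_conj_apply]
      have hj : d (i', j) = -1 := by simp [hd]
      have hl : d (i', l) = 1 := by simp [hd, Ne.symm hjl]
      rw [hj, hl]
      simp
    rw [h1, h2]; ring
  simp only [hpt] at key
  rw [integral_neg] at key
  linear_combination key / 2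

lemma moment_diag_eq (i i' : Fin m) (j j' : Fin n) :
    ∫ U, marg1 (conjDiag U lam) i i * marg2 (conjDiag U lam) j j ∂μU
      = ∫ U, marg1 (conjDiag U lam) i' i' * marg2 (conjDiag U lam) j' j' ∂μU := by
  set τ : Equiv.Perm (Fin m × Fin n) := (Equiv.swap i i').prodCongr (Equiv.swap j j') with hτ
  rw [integral_conj_unitary' μU lam (fun M => marg1 M i i * marg2 M j j)
    (permMat τ) (permMat_mem τ)]
  congr 1
  funext U
  set M := conjDiag U lam with hM
  have hsymm1 : ∀ j₀ : Fin n, τ.symm (i, j₀) = (i', Equiv.swap j j' j₀) := by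
    intro j₀
    simp [hτ, Equiv.swap_apply_left]
  have hsymm2 : ∀ i₀ : Fin m, τ.symm (i₀, j) = (Equiv.swap i i' i₀, j') := by
    intro i₀
    simp [hτ, Equiv.swap_apply_left]
  have h1 : marg1 (permMat τ * M * star (permMat τ)) i i = marg1 M i' i' := by
    simp only [marg1, perm_conj_apply]
    conv_rhs => rw [← Equiv.sum_comp (Equiv.swap j j') (fun t => M (i', t) (i', t))]
    exact Finset.sum_congr rfl fun j₀ _ => by rw [hsymm1 j₀]
  have h2 : marg2 (permMat τ * M * star (permMat τ)) j j = marg2 M j' j' := by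
    simp only [marg2, perm_conj_apply]
    conv_rhs => rw [← Equiv.sum_comp (Equiv.swap i i') (fun t => M (t, j') (t, j'))]
    exact Finset.sum_congr rfl fun i₀ _ => by rw [hsymm2 i₀]
  rw [h1, h2]

set_option synthInstance.maxHeartbeats 1000000 in
lemma moment_total [IsProbabilityMeasure μU] :
    ∑ i' : Fin m, ∑ j' : Fin n,
      ∫ U, marg1 (conjDiag U lam) i' i' * marg2 (conjDiag U lam) j' j' ∂μU
    = (((∑ x, lam x) ^ 2 : ℝ) : ℂ) := by
  have step2 : ∀ i' : Fin m,
      ∫ U, ∑ j' : Fin n, marg1 (conjDiag U lam) i' i' * marg2 (conjDiag U lam) j' j' ∂μU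
        = ∑ j' : Fin n,
            ∫ U, marg1 (conjDiag U lam) i' i' * marg2 (conjDiag U lam) j' j' ∂μU :=
    fun i' => integral_finset_sum _ fun j' _ => integrable_moment lam μU i' i' j' j'
  have step1 : ∫ U, ∑ i' : Fin m, ∑ j' : Fin n,
        marg1 (conjDiag U lam) i' i' * marg2 (conjDiag U lam) j' j' ∂μU
      = ∑ i' : Fin m, ∫ U, ∑ j' : Fin n,
          marg1 (conjDiag U lam) i' i' * marg2 (conjDiag U lam) j' j' ∂μU :=
    integral_finset_sum _ fun i' _ =>
      integrable_finset_sum _ fun j' _ => integrable_moment lam μU i' i' j' j'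
  have hpt : ∀ U, ∑ i' : Fin m, ∑ j' : Fin n,
      marg1 (conjDiag U lam) i' i' * marg2 (conjDiag U lam) j' j'
      = (((∑ x, lam x) ^ 2 : ℝ) : ℂ) := by
    intro U
    rw [← Finset.sum_mul_sum, sum_marg1_diag, sum_marg2_diag, trace_conjDiag]
    push_cast
    ring
  calc ∑ i' : Fin m, ∑ j' : Fin n,
        ∫ U, marg1 (conjDiag U lam) i' i' * marg2 (conjDiag U lam) j' j' ∂μU
      = ∑ i' : Fin m, ∫ U, ∑ j' : Fin n,
          marg1 (conjDiag U lam) i' i' * marg2 (conjDiag U lam) j' j' ∂μU := by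
        exact (Finset.sum_congr rfl fun i' _ => (step2 i').symm)
    _ = ∫ U, ∑ i' : Fin m, ∑ j' : Fin n,
          marg1 (conjDiag U lam) i' i' * marg2 (conjDiag U lam) j' j' ∂μU := step1.symm
    _ = (((∑ x, lam x) ^ 2 : ℝ) : ℂ) := by
        simp_rw [hpt]
        simp

end Cases

set_option synthInstance.maxHeartbeats 1000000

/-- **Example (`p = q = 1`):**
`𝔼[π₁(H)_{i,k} π₂(H)_{j,l}] = δ(i,k) δ(j,l) (mn)⁻¹ (Tr λ)²`. -/
theorem mixed_moment_p1_q1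
    {m n : ℕ} (hm : 2 ≤ m) (hn : 2 ≤ n) (lam : Fin m × Fin n → ℝ)
    (μU : Measure (Matrix.unitaryGroup (Fin m × Fin n) ℂ))
    (hHaar : μU.IsHaarMeasure) (hprob : IsProbabilityMeasure μU)
    (i k : Fin m) (j l : Fin n) :
    (∫ U, marg1 (conjDiag U lam) i k * marg2 (conjDiag U lam) j l ∂μU)
      = (((if i = k then 1 else 0) * (if j = l then 1 else 0) *
          ((m : ℝ) * n)⁻¹ * (∑ x, lam x) ^ 2 : ℝ) : ℂ) := by
  haveI := hHaar.toIsMulLeftInvariant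
  by_cases hik : i = k
  · subst hik
    by_cases hjl : j = l
    · subst hjl
      set S := ∫ U, marg1 (conjDiag U lam) i i * marg2 (conjDiag U lam) j j ∂μU with hS
      have hmn : ((m : ℂ) * n) ≠ 0 := by
        refine mul_ne_zero ?_ ?_ <;> exact_mod_cast Nat.cast_ne_zero.mpr (by omega)
      have hsum : (m : ℂ) * n * S = (((∑ x, lam x) ^ 2 : ℝ) : ℂ) := by
        have h1 : ∑ i' : Fin m, ∑ j' : Fin n,
            (∫ U, marg1 (conjDiag U lam) i' i' * marg2 (conjDiag U lam) j' j' ∂μU) =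
            ∑ _i' : Fin m, ∑ _j' : Fin n, S :=
          Finset.sum_congr rfl fun i' _ => Finset.sum_congr rfl fun j' _ =>
            moment_diag_eq lam μU i' i j' j
        have h2 := moment_total lam μU
        rw [h1] at h2
        simpa [Finset.sum_const, Finset.card_univ, mul_assoc] using h2
      have hrhs : (((if i = i then 1 else 0) * (if j = j then 1 else 0) *
          ((m : ℝ) * n)⁻¹ * (∑ x, lam x) ^ 2 : ℝ) : ℂ)
          = ((m : ℂ) * n)⁻¹ * (((∑ x, lam x) ^ 2 : ℝ) : ℂ) := by
        simp only [if_pos rfl, one_mul]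
        push_cast
        ring
      rw [hrhs]
      have hm0 : (m : ℂ) ≠ 0 := left_ne_zero_of_mul hmn
      have hn0 : (n : ℂ) ≠ 0 := right_ne_zero_of_mul hmn
      field_simp
      push_cast at hsum ⊢
      linear_combination hsum
    · rw [moment_zero_right lam μU i i hjl]
      simp [hjl]
  · rw [moment_zero_left lam μU hik j l]
    simp [hik]


end QMP
end

section
/- Let n ≥ 2, k ≥ 1, N = C(n+k−1, k), and let H be any N × N Hermitian matrix (with rows and columns indexed by multi-indices α ∈ ℕ^n with |α| = k). Then for all i, j ∈ {1,…,n}, π(H)_{i,j} = (1/k) · Σ_{γ ∈ ℕ^n, |γ| = k−1} √((γ_i + 1)(γ_j + 1)) · H_{e_i + γ, e_j + γ}, where e_i + γ denotes the multi-index γ with its i-th component increased by 1. -/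
open MeasureTheory Finset

namespace QMP

/-- `n`-component multi-indices of total weight `w` -/
def MultiIdx (n w : ℕ) : Type := {α : Fin n → ℕ // ∑ j, α j = w}

instance (n w : ℕ) : DecidableEq (MultiIdx n w) :=
  inferInstanceAs (DecidableEq {α : Fin n → ℕ // ∑ j, α j = w})

noncomputable instance (n w : ℕ) : Fintype (MultiIdx n w) :=
  Fintype.ofInjective
    (fun α (j : Fin n) => (⟨α.val j, Nat.lt_succ_of_le (le_trans
        (Finset.single_le_sum (fun _ _ => Nat.zero_le _) (Finset.mem_univ j))
        (le_of_eq α.property))⟩ : Fin (w + 1)))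
    (fun α β h => Subtype.ext (funext fun j => congrArg Fin.val (congrFun h j)))

/-- `tab(i)`: the multi-index recording the multiplicities of the letters in the
tuple `i` -/
def tab {n K : ℕ} (i : Fin K → Fin n) : Fin n → ℕ :=
  fun j => (Finset.univ.filter fun r => i r = j).card

/-- the isometric embedding `S : Sym^K ℂ^n ↪ (ℂ^n)^{⊗K}` as an `n^K × N` matrix -/
noncomputable def bosonS (n K : ℕ) : Matrix (Fin K → Fin n) (MultiIdx n K) ℂ :=
  fun i α => if tab i = α.val
    then ((Real.sqrt ((∏ j, Nat.factorial (α.val j)) / Nat.factorial K) : ℝ) : ℂ) else 0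

/-- partial trace over all legs of the tensor product `(ℂ^n)^{⊗(k+1)}` except the
first one -/
noncomputable def tuplePi1 {n k : ℕ}
    (M : Matrix (Fin (k + 1) → Fin n) (Fin (k + 1) → Fin n) ℂ) :
    Matrix (Fin n) (Fin n) ℂ :=
  fun i j => ∑ l : Fin k → Fin n, M (Fin.cons i l) (Fin.cons j l)

/-- the single-particle bosonic marginal `π(H) = π₁(S H Sᵀ)` -/
noncomputable def piBos {n k : ℕ} (H : Matrix (MultiIdx n (k + 1)) (MultiIdx n (k + 1)) ℂ) :
    Matrix (Fin n) (Fin n) ℂ :=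
  tuplePi1 (bosonS n (k + 1) * H * (bosonS n (k + 1)).transpose)

/-- `e_i + γ`: increase the `i`-th component of the multi-index `γ` by one -/
def MultiIdx.addOne {n w : ℕ} (i : Fin n) (γ : MultiIdx n w) : MultiIdx n (w + 1) :=
  ⟨fun j => γ.val j + (if j = i then 1 else 0), by
    rw [Finset.sum_add_distrib, γ.property, Finset.sum_ite_eq' Finset.univ i fun _ => 1]
    simp⟩

end QMP

namespace QMP

variable {n : ℕ}

lemma sum_tab {K : ℕ} (l : Fin K → Fin n) : ∑ j, tab l j = K := by
  have := Finset.card_eq_sum_card_fiberwise (f := l) (s := Finset.univ) (t := Finset.univ)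
    (fun x _ => Finset.mem_univ _)
  simpa [tab] using this.symm

def tabIdx {K : ℕ} (l : Fin K → Fin n) : MultiIdx n K := ⟨tab l, sum_tab l⟩

lemma tab_cons {K : ℕ} (i : Fin n) (l : Fin K → Fin n) (j : Fin n) :
    tab (Fin.cons i l) j = tab l j + (if j = i then 1 else 0) := by
  classical
  simp only [tab, Finset.card_filter]
  rw [Fin.sum_univ_succ]
  rcases eq_or_ne i j with h | h
  · subst h; simp [eq_comm, add_comm]
  · simp [h, Ne.symm h]

lemma tab_fiber_card_mul : ∀ (K : ℕ) (γ : Fin n → ℕ), (∑ j, γ j) = K →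
    (Finset.univ.filter fun l : Fin K → Fin n => tab l = γ).card * (∏ j, (γ j).factorial)
      = K.factorial := by
  intro K
  induction K with
  | zero =>
    intro γ hγ
    have hγ0 : ∀ j, γ j = 0 := fun j =>
      (Finset.sum_eq_zero_iff).1 hγ j (Finset.mem_univ j)
    have hall : ∀ l : Fin 0 → Fin n, tab l = γ := by
      intro l; funext j; simp [tab, hγ0 j]
    rw [Finset.filter_true_of_mem (fun l _ => hall l)]
    simp [hγ0, Finset.card_univ]
  | succ K ih =>
    intro γ hγ
    classical
    have hsplit : (Finset.univ.filter fun l : Fin (K+1) → Fin n => tab l = γ).card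
        = ∑ i : Fin n,
          (Finset.univ.filter fun l : Fin K → Fin n => tab (Fin.cons i l) = γ).card := by
      rw [Finset.card_filter]
      rw [← Fintype.sum_equiv (Fin.consEquiv (fun _ => Fin n))
        (fun p : Fin n × (Fin K → Fin n) => if tab (Fin.cons p.1 p.2) = γ then 1 else 0)
        (fun l => if tab l = γ then 1 else 0) (fun p => rfl)]
      rw [Fintype.sum_prod_type]
      exact Finset.sum_congr rfl fun i _ => by rw [Finset.card_filter]
    have key : ∀ i : Fin n,
        (Finset.univ.filter fun l : Fin K → Fin n => tab (Fin.cons i l) = γ).card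
            * (∏ j, (γ j).factorial)
          = γ i * K.factorial := by
      intro i
      rcases Nat.eq_zero_or_pos (γ i) with h0 | hpos
      · have hempty : (Finset.univ.filter
            fun l : Fin K → Fin n => tab (Fin.cons i l) = γ) = ∅ := by
          rw [Finset.filter_eq_empty_iff]
          intro l _ hEq
          have := congrFun hEq i
          rw [tab_cons] at this
          simp [h0] at this
        rw [hempty]
        simp [h0]
      · set γ' : Fin n → ℕ := fun j => γ j - (if j = i then 1 else 0) with hγ'def
        have hgi' : γ' i = γ i - 1 := by simp [γ']
        have hgi : γ' i + 1 = γ i := by omega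
        have hgj : ∀ j, j ≠ i → γ' j = γ j := by
          intro j hj; simp [γ', hj]
        have hcond : ∀ l : Fin K → Fin n, tab (Fin.cons i l) = γ ↔ tab l = γ' := by
          intro l
          constructor
          · intro h; funext j
            have hh := congrFun h j
            rw [tab_cons] at hh
            rcases eq_or_ne j i with rfl | hj
            · simp at hh
              omega
            · simp only [if_neg hj, add_zero] at hh
              rw [hgj j hj, hh]
          · intro h; funext j
            have hh := congrFun h j
            rw [tab_cons, hh]
            rcases eq_or_ne j i with rfl | hj
            · simp
              omega
            · simp only [if_neg hj, add_zero]; exact hgj j hj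
        have hsum' : ∑ j, γ' j = K := by
          have hle : ∀ j ∈ Finset.univ, (if j = i then 1 else 0) ≤ γ j := by
            intro j _
            rcases eq_or_ne j i with rfl | hj
            · simp only [if_pos rfl]; exact hpos
            · simp [hj]
          have := Finset.sum_tsub_distrib Finset.univ hle
          rw [hγ'def]
          rw [this, hγ, Finset.sum_ite_eq' Finset.univ i fun _ => 1]
          simp
        have hfilter : (Finset.univ.filter fun l : Fin K → Fin n => tab (Fin.cons i l) = γ)
            = Finset.univ.filter fun l : Fin K → Fin n => tab l = γ' :=
          Finset.filter_congr fun l _ => by rw [hcond l]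
        have hprod : (∏ j, (γ j).factorial) = γ i * ∏ j, (γ' j).factorial := by
          rw [← Finset.mul_prod_erase Finset.univ (fun j => (γ j).factorial)
              (Finset.mem_univ i),
            ← Finset.mul_prod_erase Finset.univ (fun j => (γ' j).factorial)
              (Finset.mem_univ i), ← mul_assoc]
          congr 1
          · show (γ i).factorial = γ i * (γ' i).factorial
            rw [← hgi, Nat.factorial_succ]
          · exact Finset.prod_congr rfl fun j hj => by
              rw [hgj j (Finset.ne_of_mem_erase hj)]
        rw [hfilter, hprod, ← mul_assoc, mul_comm _ (γ i), mul_assoc, ih γ' hsum']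
    rw [hsplit, Finset.sum_mul, Finset.sum_congr rfl (fun i _ => key i),
      ← Finset.sum_mul, hγ, Nat.factorial_succ]

lemma bosonS_eq {K : ℕ} (a : Fin K → Fin n) (α : MultiIdx n K) :
    bosonS n K a α = if α = tabIdx a
      then ((Real.sqrt ((∏ r, ((tabIdx a).val r).factorial) / (Nat.factorial K)) : ℝ) : ℂ)
      else 0 := by
  rcases eq_or_ne α (tabIdx a) with rfl | h
  · rw [if_pos rfl]; unfold bosonS; exact if_pos rfl
  · rw [if_neg h]; unfold bosonS
    rw [if_neg (fun hc => h (Subtype.ext hc.symm))]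

lemma SHS_apply {K : ℕ} (H : Matrix (MultiIdx n K) (MultiIdx n K) ℂ) (a b : Fin K → Fin n) :
    (bosonS n K * H * (bosonS n K).transpose) a b
      = ((Real.sqrt ((∏ r, ((tabIdx a).val r).factorial) / (Nat.factorial K)) : ℝ) : ℂ)
        * ((Real.sqrt ((∏ r, ((tabIdx b).val r).factorial) / (Nat.factorial K)) : ℝ) : ℂ)
        * H (tabIdx a) (tabIdx b) := by
  simp only [Matrix.mul_apply, Matrix.transpose_apply]
  rw [Fintype.sum_eq_single (tabIdx b)
      (fun β hβ => by rw [bosonS_eq b β, if_neg hβ, mul_zero]),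
    Fintype.sum_eq_single (tabIdx a)
      (fun α hα => by rw [bosonS_eq a α, if_neg hα, zero_mul]),
    bosonS_eq a, bosonS_eq b, if_pos rfl, if_pos rfl]
  ring

lemma addOne_prod {w : ℕ} (i : Fin n) (γ : MultiIdx n w) :
    (∏ r, ((MultiIdx.addOne i γ).val r).factorial)
      = (γ.val i + 1) * ∏ r, (γ.val r).factorial := by
  rw [← Finset.mul_prod_erase Finset.univ (fun r => ((MultiIdx.addOne i γ).val r).factorial)
      (Finset.mem_univ i),
    ← Finset.mul_prod_erase Finset.univ (fun r => (γ.val r).factorial)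
      (Finset.mem_univ i), ← mul_assoc]
  congr 1
  · show ((MultiIdx.addOne i γ).val i).factorial = (γ.val i + 1) * (γ.val i).factorial
    simp [MultiIdx.addOne, Nat.factorial_succ]
  · exact Finset.prod_congr rfl fun r hr => by
      simp [MultiIdx.addOne, Finset.ne_of_mem_erase hr]

lemma sqrt_calc (c P a b m : ℕ) (h : c * P = m.factorial) :
    (c : ℝ) * (Real.sqrt (((a * P : ℕ) : ℝ) / ((Nat.factorial (m+1) : ℕ) : ℝ))
      * Real.sqrt (((b * P : ℕ) : ℝ) / ((Nat.factorial (m+1) : ℕ) : ℝ)))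
      = 1 / ((m : ℝ) + 1) * Real.sqrt (((a : ℕ) : ℝ) * ((b : ℕ) : ℝ)) := by
  have hf0 : (0:ℝ) < ((Nat.factorial (m+1) : ℕ) : ℝ) := by
    exact_mod_cast (m+1).factorial_pos
  have e1 : ∀ x : ℕ, Real.sqrt (((x * P : ℕ) : ℝ) / ((Nat.factorial (m+1) : ℕ) : ℝ))
      = Real.sqrt x * Real.sqrt ((P:ℝ) / ((Nat.factorial (m+1) : ℕ) : ℝ)) := by
    intro x
    rw [Nat.cast_mul, mul_div_assoc, Real.sqrt_mul (Nat.cast_nonneg x)]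
  rw [e1, e1, Real.sqrt_mul (Nat.cast_nonneg a)]
  have hs : Real.sqrt ((P:ℝ) / ((Nat.factorial (m+1) : ℕ) : ℝ))
        * Real.sqrt ((P:ℝ) / ((Nat.factorial (m+1) : ℕ) : ℝ))
      = (P:ℝ) / ((Nat.factorial (m+1) : ℕ) : ℝ) :=
    Real.mul_self_sqrt (by positivity)
  have hc : (c:ℝ) * ((P:ℝ) / ((Nat.factorial (m+1) : ℕ) : ℝ)) = 1/((m:ℝ)+1) := by
    have h' : (c:ℝ) * (P:ℝ) = (m.factorial : ℝ) := by exact_mod_cast h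
    have hff : ((Nat.factorial (m+1) : ℕ) : ℝ) = ((m:ℝ)+1) * (m.factorial : ℝ) := by
      rw [Nat.factorial_succ]; push_cast; ring
    have hm0 : (m.factorial : ℝ) ≠ 0 := by positivity
    rw [← mul_div_assoc, h', hff]
    field_simp
  calc (c:ℝ) * (Real.sqrt a * Real.sqrt ((P:ℝ) / ((Nat.factorial (m+1) : ℕ) : ℝ))
        * (Real.sqrt b * Real.sqrt ((P:ℝ) / ((Nat.factorial (m+1) : ℕ) : ℝ))))
      = Real.sqrt a * Real.sqrt b
          * ((c:ℝ) * (Real.sqrt ((P:ℝ) / ((Nat.factorial (m+1) : ℕ) : ℝ))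
            * Real.sqrt ((P:ℝ) / ((Nat.factorial (m+1) : ℕ) : ℝ)))) := by ring
    _ = Real.sqrt a * Real.sqrt b * ((c:ℝ) * ((P:ℝ) / ((Nat.factorial (m+1) : ℕ) : ℝ))) := by
        rw [hs]
    _ = Real.sqrt a * Real.sqrt b * (1/((m:ℝ)+1)) := by rw [hc]
    _ = 1/((m:ℝ)+1) * (Real.sqrt a * Real.sqrt b) := by ring

/-- **Lemma (entries of the bosonic marginal).**  Here the number of bosons is `k+1 ≥ 1`. -/
theorem boson_marginal_entries
    {n k : ℕ} (hn : 2 ≤ n)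
    (H : Matrix (MultiIdx n (k + 1)) (MultiIdx n (k + 1)) ℂ) (hH : H.IsHermitian)
    (i j : Fin n) :
    piBos H i j
      = (1 / (k + 1) : ℂ) * ∑ γ : MultiIdx n k,
          ((Real.sqrt (((γ.val i + 1) : ℕ) * ((γ.val j + 1) : ℕ)) : ℝ) : ℂ) *
            H (MultiIdx.addOne i γ) (MultiIdx.addOne j γ) := by
  classical
  have hcons : ∀ (r : Fin n) (l : Fin k → Fin n),
      tabIdx (Fin.cons r l) = MultiIdx.addOne r (tabIdx l) := by
    intro r l
    apply Subtype.ext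
    funext s
    show tab (Fin.cons r l) s = tab l s + (if s = r then 1 else 0)
    exact tab_cons r l s
  have hstep : piBos H i j = ∑ l : Fin k → Fin n,
      (((Real.sqrt ((∏ r, ((MultiIdx.addOne i (tabIdx l)).val r).factorial)
            / (Nat.factorial (k+1))) : ℝ) : ℂ)
        * ((Real.sqrt ((∏ r, ((MultiIdx.addOne j (tabIdx l)).val r).factorial)
            / (Nat.factorial (k+1))) : ℝ) : ℂ)
        * H (MultiIdx.addOne i (tabIdx l)) (MultiIdx.addOne j (tabIdx l))) := by
    unfold piBos tuplePi1
    exact Finset.sum_congr rfl fun l _ => by rw [SHS_apply, hcons, hcons]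
  have e := Finset.sum_fiberwise_of_maps_to (s := (Finset.univ : Finset (Fin k → Fin n)))
    (t := (Finset.univ : Finset (MultiIdx n k))) (g := tabIdx)
    (fun l _ => Finset.mem_univ _)
    (fun l => (((Real.sqrt ((∏ r, ((MultiIdx.addOne i (tabIdx l)).val r).factorial)
            / (Nat.factorial (k+1))) : ℝ) : ℂ)
        * ((Real.sqrt ((∏ r, ((MultiIdx.addOne j (tabIdx l)).val r).factorial)
            / (Nat.factorial (k+1))) : ℝ) : ℂ)
        * H (MultiIdx.addOne i (tabIdx l)) (MultiIdx.addOne j (tabIdx l))))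
  rw [hstep, ← e, Finset.mul_sum]
  refine Finset.sum_congr rfl fun γ _ => ?_
  rw [Finset.sum_congr rfl (fun l hl => by rw [(Finset.mem_filter.1 hl).2]),
    Finset.sum_const, nsmul_eq_mul]
  have hcard : (Finset.univ.filter fun l : Fin k → Fin n => tabIdx l = γ)
      = Finset.univ.filter fun l : Fin k → Fin n => tab l = γ.val :=
    Finset.filter_congr fun l _ => Subtype.ext_iff
  rw [hcard, addOne_prod, addOne_prod]
  have hP := tab_fiber_card_mul k γ.val γ.property
  have key := sqrt_calc ((Finset.univ.filter fun l : Fin k → Fin n => tab l = γ.val).card)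
      (∏ r, (γ.val r).factorial) (γ.val i + 1) (γ.val j + 1) k hP
  have keyC := congrArg (fun x : ℝ => (x : ℂ)) key
  push_cast at keyC ⊢
  linear_combination H (MultiIdx.addOne i γ) (MultiIdx.addOne j γ) * keyC

end QMP
end

section
/- Let n, k be integers with 1 ≤ k ≤ n, N = C(n,k), and let H be any N × N Hermitian matrix (with rows and columns indexed by 𝒜_k). Then for all i, j ∈ {1,…,n}, π(H)_{i,j} = (1/k) · Σ_{l ∈ 𝒜_{k−1}, {l_1,…,l_{k−1}} ∌ i,j} sgn(i, l) · sgn(j, l) · H_{sr(i,l), sr(j,l)}, where (i, l) denotes the k-tuple (i, l_1, …, l_{k−1}). -/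
open Finset

namespace QMP

instance decidableStrictMono {n K : ℕ} (a : Fin K → Fin n) : Decidable (StrictMono a) :=
  decidable_of_iff (∀ i j : Fin K, i < j → a i < a j) Iff.rfl

/-- `𝒜_K`: strictly increasing `K`-tuples with entries in `{1,…,n}` -/
def Asc (n K : ℕ) : Type := {a : Fin K → Fin n // StrictMono a}

instance (n K : ℕ) : DecidableEq (Asc n K) :=
  inferInstanceAs (DecidableEq {a : Fin K → Fin n // StrictMono a})

instance (n K : ℕ) : Fintype (Asc n K) :=
  inferInstanceAs (Fintype {a : Fin K → Fin n // StrictMono a})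

/-- `sgn(i)`: zero if the tuple `i` has a repeated entry; otherwise the sign of the
permutation sorting `i` into increasing order -/
def fsgn {n K : ℕ} (i : Fin K → Fin n) : ℝ :=
  if Function.Injective i then ((Equiv.Perm.sign (Tuple.sort i) : ℤ) : ℝ) else 0

/-- `sr(i)`: the tuple `i` sorted into nondecreasing order -/
def sortTuple {n K : ℕ} (i : Fin K → Fin n) : Fin K → Fin n := i ∘ Tuple.sort i

/-- the isometric embedding `A : ∧^K ℂ^n ↪ (ℂ^n)^{⊗K}` as an `n^K × C(n,K)` matrix -/
noncomputable def fermionA (n K : ℕ) : Matrix (Fin K → Fin n) (Asc n K) ℂ :=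
  fun i a => if sortTuple i = a.val then ((fsgn i / Real.sqrt (Nat.factorial K) : ℝ) : ℂ) else 0

/-- the single-particle fermionic marginal `π(H) = π₁(A H Aᵀ)` -/
noncomputable def piFer {n k : ℕ} (H : Matrix (Asc n (k + 1)) (Asc n (k + 1)) ℂ) :
    Matrix (Fin n) (Fin n) ℂ :=
  tuplePi1 (fermionA n (k + 1) * H * (fermionA n (k + 1)).transpose)

/-- `H_{sr(f), sr(g)}`: the entry of `H` at the sorted tuples `sr(f)`, `sr(g)`
(interpreted as `0` when `f` or `g` has a repeated entry) -/
def entrySorted {n K : ℕ} (H : Matrix (Asc n K) (Asc n K) ℂ) (f g : Fin K → Fin n) : ℂ :=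
  if hf : StrictMono (sortTuple f) then
    if hg : StrictMono (sortTuple g) then H ⟨sortTuple f, hf⟩ ⟨sortTuple g, hg⟩ else 0
  else 0

/-- the fermionic `Δ`-function, for a system of `k+1` fermions -/
noncomputable def ferDelta (n k : ℕ) {p : ℕ} (σ : Equiv.Perm (Fin p))
    (i j : Fin p → Fin n) : ℝ :=
  (1 / ((k : ℝ) + 1) ^ p) *
    ∑ l ∈ Finset.univ.filter (fun l : Fin p → Asc n k =>
        ∀ s r, (l s).val r ≠ i s ∧ (l s).val r ≠ j s),
      (∏ s, fsgn (Fin.cons (i s) ((l s).val)) * fsgn (Fin.cons (j s) ((l s).val))) *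
        deltaFun (⇑σ) (fun s => sortTuple (Fin.cons (i s) ((l s).val)))
          (fun s => sortTuple (Fin.cons (j s) ((l s).val)))

/-! ### Auxiliary lemmas -/

lemma sortTuple_comp_perm {n K : ℕ} (f : Fin K → Fin n) (σ : Equiv.Perm (Fin K)) :
    sortTuple (f ∘ σ) = sortTuple f :=
  Tuple.comp_perm_comp_sort_eq_comp_sort

lemma sort_comp_perm {n K : ℕ} {f : Fin K → Fin n} (hf : Function.Injective f)
    (σ : Equiv.Perm (Fin K)) : Tuple.sort (f ∘ σ) = σ⁻¹ * Tuple.sort f := by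
  have h := sortTuple_comp_perm f σ
  unfold sortTuple at h
  have h2 : ∀ x, f ((σ * Tuple.sort (f ∘ ⇑σ)) x) = f (Tuple.sort f x) := fun x =>
    congrFun h x
  have h3 : σ * Tuple.sort (f ∘ ⇑σ) = Tuple.sort f := Equiv.ext fun x => hf (h2 x)
  rw [← h3]; group

lemma fsgn_comp_perm {n K : ℕ} (f : Fin K → Fin n) (σ : Equiv.Perm (Fin K)) :
    fsgn (f ∘ σ) = ((Equiv.Perm.sign σ : ℤ) : ℝ) * fsgn f := by
  by_cases hf : Function.Injective f
  · have hfσ : Function.Injective (f ∘ σ) := hf.comp σ.injective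
    rw [fsgn, fsgn, if_pos hfσ, if_pos hf, sort_comp_perm hf σ]
    rw [map_mul, map_inv, Int.units_inv_eq_self]
    push_cast
    ring
  · have hfσ : ¬ Function.Injective (f ∘ σ) := fun h => hf (by
      have := h.comp σ.symm.injective
      simpa [Function.comp_assoc, Function.comp_def] using this)
    rw [fsgn, fsgn, if_neg hfσ, if_neg hf, mul_zero]

lemma cons_comp_decompose {n K : ℕ} (x : Fin n) (l : Fin K → Fin n)
    (σ : Equiv.Perm (Fin K)) :
    Fin.cons x l ∘ ⇑(Equiv.Perm.decomposeFin.symm (0, σ)) = Fin.cons x (l ∘ σ) := by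
  funext r
  refine Fin.cases ?_ (fun r => ?_) r
  · simp
  · simp [Equiv.Perm.decomposeFin_symm_apply_succ]

lemma entrySorted_congr {n K : ℕ} (H : Matrix (Asc n K) (Asc n K) ℂ)
    {f g f' g' : Fin K → Fin n} (h1 : sortTuple f = sortTuple f')
    (h2 : sortTuple g = sortTuple g') : entrySorted H f g = entrySorted H f' g' := by
  unfold entrySorted
  rw [h1, h2]

lemma AHA_apply {n K : ℕ} (H : Matrix (Asc n K) (Asc n K) ℂ) (f g : Fin K → Fin n) :
    (fermionA n K * H * (fermionA n K).transpose) f g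
      = ((fsgn f * fsgn g / (Nat.factorial K) : ℝ) : ℂ) * entrySorted H f g := by
  classical
  simp only [Matrix.mul_apply, Matrix.transpose_apply, fermionA]
  set s : ℝ := Real.sqrt (Nat.factorial K) with hs
  by_cases hf : StrictMono (sortTuple f)
  · by_cases hg : StrictMono (sortTuple g)
    · set a₀ : Asc n K := ⟨sortTuple f, hf⟩
      set b₀ : Asc n K := ⟨sortTuple g, hg⟩
      have hfa : ∀ a : Asc n K, (if sortTuple f = a.val then ((fsgn f / s : ℝ) : ℂ) else 0)
          = if a = a₀ then ((fsgn f / s : ℝ) : ℂ) else 0 := by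
        intro a
        by_cases h : a = a₀
        · subst h; have e : sortTuple f = a₀.val := rfl; simp [e]
        · rw [if_neg h, if_neg]
          intro hc
          exact h (Subtype.ext hc.symm)
      have hgb : ∀ b : Asc n K, (if sortTuple g = b.val then ((fsgn g / s : ℝ) : ℂ) else 0)
          = if b = b₀ then ((fsgn g / s : ℝ) : ℂ) else 0 := by
        intro b
        by_cases h : b = b₀
        · subst h; have e : sortTuple g = b₀.val := rfl; simp [e]
        · rw [if_neg h, if_neg]
          intro hc
          exact h (Subtype.ext hc.symm)
      simp only [hfa, hgb, ite_mul, zero_mul, mul_ite, mul_zero]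
      rw [Finset.sum_ite_eq' univ b₀]
      simp only [mem_univ, if_pos]
      rw [Finset.sum_ite_eq' univ a₀]
      simp only [mem_univ, if_pos]
      rw [entrySorted, dif_pos hf, dif_pos hg]
      have hss : s * s = (Nat.factorial K : ℝ) := by
        rw [hs, Real.mul_self_sqrt (Nat.cast_nonneg _)]
      have : ((fsgn f / s : ℝ) : ℂ) * H a₀ b₀ * ((fsgn g / s : ℝ) : ℂ)
          = ((fsgn f / s * (fsgn g / s) : ℝ) : ℂ) * H a₀ b₀ := by
        push_cast; ring
      rw [this, div_mul_div_comm, hss]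
    · rw [entrySorted, dif_pos hf, dif_neg hg, mul_zero]
      refine Finset.sum_eq_zero fun b _ => ?_
      rw [if_neg, mul_zero]
      intro hc
      exact hg (hc ▸ b.property)
  · rw [entrySorted, dif_neg hf, mul_zero]
    refine Finset.sum_eq_zero fun b _ => ?_
    rw [Finset.sum_eq_zero, zero_mul]
    intro a _
    rw [if_neg, zero_mul]
    intro hc
    exact hf (hc ▸ a.property)

lemma injective_cons {n K : ℕ} {x : Fin n} {l : Fin K → Fin n}
    (h : Function.Injective (Fin.cons x l : Fin (K + 1) → Fin n)) :
    Function.Injective l ∧ ∀ r, l r ≠ x := by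
  constructor
  · intro a b hab
    have := @h a.succ b.succ (by simpa using hab)
    exact Fin.succ_injective _ this
  · intro r hr
    have h0 : (Fin.cons x l : Fin (K+1) → Fin n) r.succ
        = (Fin.cons x l : Fin (K+1) → Fin n) 0 := by simpa using hr
    exact Fin.succ_ne_zero r (h h0)

/-- **Lemma (entries of the fermionic marginal).** -/
theorem fermion_marginal_entries
    {n k : ℕ} (hkn : k + 1 ≤ n)
    (H : Matrix (Asc n (k + 1)) (Asc n (k + 1)) ℂ) (hH : H.IsHermitian)
    (i j : Fin n) :
    piFer H i j
      = (1 / (k + 1) : ℂ) *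
          ∑ l ∈ Finset.univ.filter (fun l : Asc n k => ∀ r, l.val r ≠ i ∧ l.val r ≠ j),
            ((fsgn (Fin.cons i l.val) * fsgn (Fin.cons j l.val) : ℝ) : ℂ) *
              entrySorted H (Fin.cons i l.val) (Fin.cons j l.val) := by
  classical
  set G : (Fin k → Fin n) → ℂ := fun l =>
    ((fsgn (Fin.cons i l) * fsgn (Fin.cons j l) : ℝ) : ℂ) *
      entrySorted H (Fin.cons i l) (Fin.cons j l) with hG
  set S : Finset (Fin k → Fin n) :=
    Finset.univ.filter (fun l => Function.Injective l ∧ ∀ r, l r ≠ i ∧ l r ≠ j) with hS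
  set T : Finset (Asc n k) :=
    Finset.univ.filter (fun l : Asc n k => ∀ r, l.val r ≠ i ∧ l.val r ≠ j) with hT
  have step0 : piFer H i j
      = (1 / ((Nat.factorial (k + 1)) : ℂ)) * ∑ l : Fin k → Fin n, G l := by
    rw [piFer, tuplePi1, Finset.mul_sum]
    refine Finset.sum_congr rfl fun l _ => ?_
    rw [AHA_apply]
    simp only [hG]
    push_cast
    ring
  have hzero : ∀ l : Fin k → Fin n, l ∉ S → G l = 0 := by
    intro l hl
    have hni : ¬ Function.Injective (Fin.cons i l : Fin (k+1) → Fin n)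
        ∨ ¬ Function.Injective (Fin.cons j l : Fin (k+1) → Fin n) := by
      by_contra hc
      push_neg at hc
      obtain ⟨h1, h2⟩ := hc
      obtain ⟨hinj, hi'⟩ := injective_cons h1
      obtain ⟨-, hj'⟩ := injective_cons h2
      exact hl (Finset.mem_filter.mpr ⟨Finset.mem_univ _,
        hinj, fun r => ⟨hi' r, hj' r⟩⟩)
    rcases hni with h | h
    · simp [hG, fsgn, if_neg h]
    · simp [hG, fsgn, if_neg h]
  have hSuniv : ∑ l ∈ S, G l = ∑ l : Fin k → Fin n, G l :=
    Finset.sum_subset (Finset.filter_subset _ _) (fun x _ hx => hzero x hx)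
  have hLI : ∀ l : Fin k → Fin n, sortTuple l ∘ ⇑(Tuple.sort l)⁻¹ = l := by
    intro l
    funext r
    simp [sortTuple, Function.comp_apply]
  have step2 : ∑ l ∈ S, G l
      = ∑ p ∈ T ×ˢ (Finset.univ : Finset (Equiv.Perm (Fin k))), G (p.1.val ∘ p.2) := by
    refine Finset.sum_bij'
      (fun l hl => (⟨sortTuple l,
        (Tuple.monotone_sort l).strictMono_of_injective
          (((Finset.mem_filter.mp hl).2.1).comp (Tuple.sort l).injective)⟩,
        (Tuple.sort l)⁻¹))
      (fun p _ => p.1.val ∘ ⇑p.2) ?_ ?_ ?_ ?_ ?_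
    · intro l hl
      rw [Finset.mem_product]
      refine ⟨Finset.mem_filter.mpr ⟨Finset.mem_univ _, fun r => ?_⟩, Finset.mem_univ _⟩
      exact (Finset.mem_filter.mp hl).2.2 (Tuple.sort l r)
    · intro p hp
      rw [Finset.mem_product] at hp
      refine Finset.mem_filter.mpr ⟨Finset.mem_univ _,
        p.1.2.injective.comp p.2.injective, fun r => ?_⟩
      exact (Finset.mem_filter.mp hp.1).2 (p.2 r)
    · intro l hl
      exact hLI l
    · intro p hp
      obtain ⟨⟨l₀, hmono⟩, σ⟩ := p
      have hsog : sortTuple (l₀ ∘ ⇑σ) = l₀ := by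
        rw [sortTuple_comp_perm, sortTuple,
          Tuple.sort_eq_refl_iff_monotone.mpr hmono.monotone]
        rfl
      have hsort : Tuple.sort (l₀ ∘ ⇑σ) = σ⁻¹ := by
        rw [sort_comp_perm hmono.injective σ,
          show Tuple.sort l₀ = (1 : Equiv.Perm (Fin k)) from
            Tuple.sort_eq_refl_iff_monotone.mpr hmono.monotone, mul_one]
      refine Prod.ext (Subtype.ext hsog) ?_
      simp [hsort]
    · intro l hl
      exact (congrArg G (hLI l)).symm
  have step3 : ∑ p ∈ T ×ˢ (Finset.univ : Finset (Equiv.Perm (Fin k))), G (p.1.val ∘ p.2)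
      = ∑ l₀ ∈ T, ∑ σ : Equiv.Perm (Fin k), G (l₀.val ∘ ⇑σ) := by
    rw [Finset.sum_product]
  have hinv : ∀ (l₀ : Asc n k) (σ : Equiv.Perm (Fin k)), G (l₀.val ∘ ⇑σ) = G l₀.val := by
    intro l₀ σ
    have hc1 : Fin.cons i (l₀.val ∘ ⇑σ)
        = Fin.cons i l₀.val ∘ ⇑(Equiv.Perm.decomposeFin.symm (0, σ)) :=
      (cons_comp_decompose i l₀.val σ).symm
    have hc2 : Fin.cons j (l₀.val ∘ ⇑σ)
        = Fin.cons j l₀.val ∘ ⇑(Equiv.Perm.decomposeFin.symm (0, σ)) :=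
      (cons_comp_decompose j l₀.val σ).symm
    have hsign : ((Equiv.Perm.sign (Equiv.Perm.decomposeFin.symm (0, σ)) : ℤ) : ℝ)
        = ((Equiv.Perm.sign σ : ℤ) : ℝ) := by
      rw [Equiv.Perm.decomposeFin.symm_sign, if_pos rfl, one_mul]
    have hsq : ((Equiv.Perm.sign σ : ℤ) : ℝ) * ((Equiv.Perm.sign σ : ℤ) : ℝ) = 1 := by
      rw [← Int.cast_mul, ← Units.val_mul, Int.units_mul_self, Units.val_one, Int.cast_one]
    have hE : entrySorted H (Fin.cons i (l₀.val ∘ ⇑σ)) (Fin.cons j (l₀.val ∘ ⇑σ))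
        = entrySorted H (Fin.cons i l₀.val) (Fin.cons j l₀.val) := by
      refine entrySorted_congr H ?_ ?_
      · rw [hc1]; exact sortTuple_comp_perm _ _
      · rw [hc2]; exact sortTuple_comp_perm _ _
    simp only [hG, hE]
    rw [hc1, hc2, fsgn_comp_perm, fsgn_comp_perm, hsign]
    congr 1
    push_cast
    rw [show ∀ a b c : ℂ, a * b * (a * c) = (a * a) * (b * c) from fun a b c => by ring]
    rw [show ((Equiv.Perm.sign σ : ℤ) : ℂ) * ((Equiv.Perm.sign σ : ℤ) : ℂ) = 1 by
      exact_mod_cast congrArg (Complex.ofReal) hsq]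
    rw [one_mul]
  have step4 : ∑ l₀ ∈ T, ∑ σ : Equiv.Perm (Fin k), G (l₀.val ∘ ⇑σ)
      = (Nat.factorial k : ℂ) * ∑ l₀ ∈ T, G l₀.val := by
    rw [Finset.mul_sum]
    refine Finset.sum_congr rfl fun l₀ _ => ?_
    simp only [hinv l₀]
    rw [Finset.sum_const, Finset.card_univ, Fintype.card_perm, Fintype.card_fin,
      nsmul_eq_mul]
  rw [step0, ← hSuniv, step2, step3, step4]
  have hfac : ((Nat.factorial (k + 1) : ℂ)) = ((k : ℂ) + 1) * (Nat.factorial k : ℂ) := by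
    rw [Nat.factorial_succ]
    push_cast
    ring
  have h1 : ((k : ℂ) + 1) ≠ 0 := Nat.cast_add_one_ne_zero k
  have h2 : ((Nat.factorial k : ℂ)) ≠ 0 := Nat.cast_ne_zero.mpr (Nat.factorial_ne_zero k)
  rw [hfac]
  have : ∑ l ∈ T, ((fsgn (Fin.cons i l.val) * fsgn (Fin.cons j l.val) : ℝ) : ℂ) *
      entrySorted H (Fin.cons i l.val) (Fin.cons j l.val) = ∑ l₀ ∈ T, G l₀.val := by
    refine Finset.sum_congr rfl fun l₀ _ => ?_
    simp [hG]
  rw [this]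
  field_simp

end QMP
end
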